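/- arXiv:2510.20986 — 9 statements merged into one kernel-verified Lean document; each statement's English description precedes it below -/
import Mathlib

section
/- Assume the posterior likelihood function φ satisfies internal consistency [INC]. Then for any two states ω, ω' with ω ↠ ω', any two edge-paths in E from ω to ω' give the same product of φ-values: if ((ω_i, ω_{i+1}))_{i=1}^m and ((ξ_j, ξ_{j+1}))_{j=1}^ℓ are sequences of edges of E with ω_1 = ξ_1 = ω and ω_{m+1} = ξ_{ℓ+1} = ω', then ∏_{i=1}^m φ(ω_i, ω_{i+1}) = ∏_{j=1}^ℓ φ(ξ_j, ξ_{j+1}). Consequently, φ has a well-defined extension to every pair (ω, ω') with ω ↠ ω', satisfying ∏_{i=1}^m φ(ω_i, ω_{i+1}) = φ(ω_1, ω_{m+1}) for every edge-path ((ω_i, ω_{i+1}))_{i=1}^m in E. -/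
open Finset

/-- `ωs` (a sequence of `m+1` states) is a path of edges of `E`. -/
def IsPath {Ω : Type} (E : Ω → Ω → Prop) {m : ℕ} (ωs : Fin (m + 1) → Ω) : Prop :=
  ∀ i : Fin m, E (ωs i.castSucc) (ωs i.succ)

/-- The product of the values of `φ` along the edges of the path `ωs`. -/
noncomputable def pathProd {Ω : Type} (φ : Ω → Ω → ℝ) {m : ℕ} (ωs : Fin (m + 1) → Ω) : ℝ :=
  ∏ i : Fin m, φ (ωs i.castSucc) (ωs i.succ)

/-- Concatenation of two paths. -/
def catPath {Ω : Type} {m ℓ : ℕ} (ωs : Fin (m + 1) → Ω) (ξs : Fin (ℓ + 1) → Ω) :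
    Fin (m + ℓ + 1) → Ω :=
  fun i => if h : (i : ℕ) < m then ωs ⟨i, by omega⟩ else ξs ⟨(i : ℕ) - m, by omega⟩

lemma catPath_small {Ω : Type} {m ℓ : ℕ} (ωs : Fin (m + 1) → Ω) (ξs : Fin (ℓ + 1) → Ω)
    (hj : ωs (Fin.last m) = ξs 0) (i : Fin (m + ℓ + 1)) (h : (i : ℕ) ≤ m) :
    catPath ωs ξs i = ωs ⟨i, by omega⟩ := by
  unfold catPath
  by_cases h' : (i : ℕ) < m
  · simp [h']
  · have hm : (i : ℕ) = m := by omega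
    rw [dif_neg h']
    have h1 : (⟨(i : ℕ) - m, by omega⟩ : Fin (ℓ + 1)) = 0 := by
      apply Fin.ext; simp [hm]
    have h2 : (⟨(i : ℕ), by omega⟩ : Fin (m + 1)) = Fin.last m := by
      apply Fin.ext; simp [hm]
    rw [h1, h2, hj]

lemma catPath_big {Ω : Type} {m ℓ : ℕ} (ωs : Fin (m + 1) → Ω) (ξs : Fin (ℓ + 1) → Ω)
    (i : Fin (m + ℓ + 1)) (h : m ≤ (i : ℕ)) :
    catPath ωs ξs i = ξs ⟨(i : ℕ) - m, by omega⟩ := by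
  unfold catPath
  rw [dif_neg (by omega)]

lemma isPath_catPath {Ω : Type} {E : Ω → Ω → Prop} {m ℓ : ℕ}
    {ωs : Fin (m + 1) → Ω} {ξs : Fin (ℓ + 1) → Ω}
    (hj : ωs (Fin.last m) = ξs 0) (h1 : IsPath E ωs) (h2 : IsPath E ξs) :
    IsPath E (catPath ωs ξs) := by
  intro i
  by_cases h : (i : ℕ) < m
  · have e1 : catPath ωs ξs i.castSucc = ωs (Fin.castSucc ⟨(i : ℕ), h⟩) :=
      (catPath_small ωs ξs hj _ (by simp only [Fin.coe_castSucc, Fin.val_succ, Fin.coe_castAdd, Fin.coe_natAdd, Fin.val_last, Fin.val_zero] <;> omega)).trans (congrArg ωs (Fin.ext (by simp only [Fin.coe_castSucc, Fin.val_succ, Fin.coe_castAdd, Fin.coe_natAdd, Fin.val_last, Fin.val_zero] <;> omega)))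
    have e2 : catPath ωs ξs i.succ = ωs (Fin.succ ⟨(i : ℕ), h⟩) :=
      (catPath_small ωs ξs hj _ (by simp only [Fin.coe_castSucc, Fin.val_succ, Fin.coe_castAdd, Fin.coe_natAdd, Fin.val_last, Fin.val_zero] <;> omega)).trans (congrArg ωs (Fin.ext (by simp only [Fin.coe_castSucc, Fin.val_succ, Fin.coe_castAdd, Fin.coe_natAdd, Fin.val_last, Fin.val_zero] <;> omega)))
    rw [e1, e2]
    exact h1 ⟨(i : ℕ), h⟩
  · have hm : m ≤ (i : ℕ) := by omega
    have hlt : (i : ℕ) - m < ℓ := by have := i.isLt; omega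
    have e1 : catPath ωs ξs i.castSucc = ξs (Fin.castSucc ⟨(i : ℕ) - m, hlt⟩) :=
      (catPath_big ωs ξs _ (by simp only [Fin.coe_castSucc, Fin.val_succ, Fin.coe_castAdd, Fin.coe_natAdd, Fin.val_last, Fin.val_zero] <;> omega)).trans (congrArg ξs (Fin.ext (by simp only [Fin.coe_castSucc, Fin.val_succ, Fin.coe_castAdd, Fin.coe_natAdd, Fin.val_last, Fin.val_zero] <;> omega)))
    have e2 : catPath ωs ξs i.succ = ξs (Fin.succ ⟨(i : ℕ) - m, hlt⟩) :=
      (catPath_big ωs ξs _ (by simp only [Fin.coe_castSucc, Fin.val_succ, Fin.coe_castAdd, Fin.coe_natAdd, Fin.val_last, Fin.val_zero] <;> omega)).trans (congrArg ξs (Fin.ext (by simp only [Fin.coe_castSucc, Fin.val_succ, Fin.coe_castAdd, Fin.coe_natAdd, Fin.val_last, Fin.val_zero] <;> omega)))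
    rw [e1, e2]
    exact h2 ⟨(i : ℕ) - m, hlt⟩

lemma pathProd_catPath {Ω : Type} (φ : Ω → Ω → ℝ) {m ℓ : ℕ}
    (ωs : Fin (m + 1) → Ω) (ξs : Fin (ℓ + 1) → Ω)
    (hj : ωs (Fin.last m) = ξs 0) :
    pathProd φ (catPath ωs ξs) = pathProd φ ωs * pathProd φ ξs := by
  unfold pathProd
  rw [Fin.prod_univ_add
    (f := fun i : Fin (m + ℓ) =>
      φ (catPath ωs ξs i.castSucc) (catPath ωs ξs i.succ))]
  congr 1
  · apply Finset.prod_congr rfl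
    intro i _
    have e1 : catPath ωs ξs (Fin.castAdd ℓ i).castSucc = ωs i.castSucc :=
      (catPath_small ωs ξs hj _ (by simp only [Fin.coe_castSucc, Fin.val_succ, Fin.coe_castAdd, Fin.coe_natAdd, Fin.val_last, Fin.val_zero] <;> omega)).trans (congrArg ωs (Fin.ext (by simp only [Fin.coe_castSucc, Fin.val_succ, Fin.coe_castAdd, Fin.coe_natAdd, Fin.val_last, Fin.val_zero] <;> omega)))
    have e2 : catPath ωs ξs (Fin.castAdd ℓ i).succ = ωs i.succ :=
      (catPath_small ωs ξs hj _ (by simp only [Fin.coe_castSucc, Fin.val_succ, Fin.coe_castAdd, Fin.coe_natAdd, Fin.val_last, Fin.val_zero] <;> omega)).trans (congrArg ωs (Fin.ext (by simp only [Fin.coe_castSucc, Fin.val_succ, Fin.coe_castAdd, Fin.coe_natAdd, Fin.val_last, Fin.val_zero] <;> omega)))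
    rw [e1, e2]
  · apply Finset.prod_congr rfl
    intro i _
    have e1 : catPath ωs ξs (Fin.natAdd m i).castSucc = ξs i.castSucc :=
      (catPath_big ωs ξs _ (by simp only [Fin.coe_castSucc, Fin.val_succ, Fin.coe_castAdd, Fin.coe_natAdd, Fin.val_last, Fin.val_zero] <;> omega)).trans (congrArg ξs (Fin.ext (by simp only [Fin.coe_castSucc, Fin.val_succ, Fin.coe_castAdd, Fin.coe_natAdd, Fin.val_last, Fin.val_zero] <;> omega)))
    have e2 : catPath ωs ξs (Fin.natAdd m i).succ = ξs i.succ :=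
      (catPath_big ωs ξs _ (by simp only [Fin.coe_castSucc, Fin.val_succ, Fin.coe_castAdd, Fin.coe_natAdd, Fin.val_last, Fin.val_zero] <;> omega)).trans (congrArg ξs (Fin.ext (by simp only [Fin.coe_castSucc, Fin.val_succ, Fin.coe_castAdd, Fin.coe_natAdd, Fin.val_last, Fin.val_zero] <;> omega)))
    rw [e1, e2]

/-- Reversal of a path. -/
def revPath {Ω : Type} {ℓ : ℕ} (ξs : Fin (ℓ + 1) → Ω) : Fin (ℓ + 1) → Ω :=
  fun i => ξs i.rev

lemma isPath_revPath {Ω : Type} {E : Ω → Ω → Prop} (hsym : ∀ a b, E a b → E b a)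
    {ℓ : ℕ} {ξs : Fin (ℓ + 1) → Ω} (h : IsPath E ξs) : IsPath E (revPath ξs) := by
  intro i
  unfold revPath
  rw [Fin.rev_castSucc, Fin.rev_succ]
  exact hsym _ _ (h i.rev)

lemma pathProd_revPath {Ω : Type} {E : Ω → Ω → Prop} (φ : Ω → Ω → ℝ)
    (hsym : ∀ a b, E a b → E b a)
    (hrec : ∀ ω ω', E ω ω' → φ ω ω' = 1 / φ ω' ω)
    {ℓ : ℕ} {ξs : Fin (ℓ + 1) → Ω} (h : IsPath E ξs) :
    pathProd φ (revPath ξs) = (pathProd φ ξs)⁻¹ := by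
  unfold pathProd revPath
  have step : ∀ i : Fin ℓ,
      φ (ξs i.castSucc.rev) (ξs i.succ.rev)
        = (fun j : Fin ℓ => (φ (ξs j.castSucc) (ξs j.succ))⁻¹) i.rev := by
    intro i
    simp only [Fin.rev_castSucc, Fin.rev_succ]
    rw [hrec _ _ (hsym _ _ (h i.rev))]
    simp
  calc ∏ i : Fin ℓ, φ (ξs i.castSucc.rev) (ξs i.succ.rev)
      = ∏ i : Fin ℓ, (fun j : Fin ℓ => (φ (ξs j.castSucc) (ξs j.succ))⁻¹) (Fin.revPerm i) := by
        exact Finset.prod_congr rfl (fun i _ => step i)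
    _ = ∏ j : Fin ℓ, (φ (ξs j.castSucc) (ξs j.succ))⁻¹ :=
        Equiv.prod_comp (Fin.revPerm : Equiv.Perm (Fin ℓ))
          (fun j : Fin ℓ => (φ (ξs j.castSucc) (ξs j.succ))⁻¹)
    _ = (∏ j : Fin ℓ, φ (ξs j.castSucc) (ξs j.succ))⁻¹ := by
        rw [Finset.prod_inv_distrib]

/-- under internal consistency, any two edge-paths between the same
endpoints yield the same product of `φ`-values; consequently `φ` extends to a
well-defined function on pairs connected by `↠`. -/
theorem stmt_0 {Ω : Type} [Fintype Ω] [Nonempty Ω] {n : ℕ} (hn : 2 ≤ n)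
    (P : Fin n → Ω → Ω → Prop) (hP : ∀ i, Equivalence (P i))
    (F : Ω → Ω → Prop) (hF : Equivalence F)
    (E : Ω → Ω → Prop) (hE : ∀ ω ω', E ω ω' ↔ ∃ i, P i ω ω')
    (φ : Ω → Ω → ℝ)
    (hpos : ∀ ω ω', E ω ω' → 0 < φ ω ω')
    (hrec : ∀ ω ω', E ω ω' → φ ω ω' = 1 / φ ω' ω)
    -- internal consistency [INC]: the product along every F-cycle equals 1
    (hINC : ∀ (m : ℕ) (ωs : Fin (m + 1) → Ω), IsPath E ωs →
      F (ωs 0) (ωs (Fin.last m)) → pathProd φ ωs = 1) :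
    (∀ (m ℓ : ℕ) (ωs : Fin (m + 1) → Ω) (ξs : Fin (ℓ + 1) → Ω),
      IsPath E ωs → IsPath E ξs → ωs 0 = ξs 0 → ωs (Fin.last m) = ξs (Fin.last ℓ) →
      pathProd φ ωs = pathProd φ ξs) ∧
    (∃ Φ : Ω → Ω → ℝ, (∀ ω ω', E ω ω' → Φ ω ω' = φ ω ω') ∧
      ∀ (m : ℕ) (ωs : Fin (m + 1) → Ω), IsPath E ωs →
        pathProd φ ωs = Φ (ωs 0) (ωs (Fin.last m))) := by
  classical
  have hsym : ∀ a b, E a b → E b a := by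
    intro a b hab
    rcases (hE a b).1 hab with ⟨i, hi⟩
    exact (hE b a).2 ⟨i, (hP i).symm hi⟩
  have ppos : ∀ (m : ℕ) (ωs : Fin (m + 1) → Ω), IsPath E ωs → 0 < pathProd φ ωs := by
    intro m ωs hωs
    exact Finset.prod_pos fun i _ => hpos _ _ (hωs i)
  have key : ∀ (m ℓ : ℕ) (ωs : Fin (m + 1) → Ω) (ξs : Fin (ℓ + 1) → Ω),
      IsPath E ωs → IsPath E ξs → ωs 0 = ξs 0 → ωs (Fin.last m) = ξs (Fin.last ℓ) →
      pathProd φ ωs = pathProd φ ξs := by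
    intro m ℓ ωs ξs h1 h2 h0 hlast
    have hj : ωs (Fin.last m) = revPath ξs 0 := by
      unfold revPath
      rw [Fin.rev_zero, hlast]
    have hcyc : IsPath E (catPath ωs (revPath ξs)) :=
      isPath_catPath hj h1 (isPath_revPath hsym h2)
    have hend0 : catPath ωs (revPath ξs) 0 = ωs 0 :=
      (catPath_small ωs (revPath ξs) hj 0 (by simp only [Fin.coe_castSucc, Fin.val_succ, Fin.coe_castAdd, Fin.coe_natAdd, Fin.val_last, Fin.val_zero] <;> omega)).trans (congrArg ωs (Fin.ext (by simp only [Fin.coe_castSucc, Fin.val_succ, Fin.coe_castAdd, Fin.coe_natAdd, Fin.val_last, Fin.val_zero] <;> omega)))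
    have hendlast : catPath ωs (revPath ξs) (Fin.last (m + ℓ)) = ωs 0 := by
      refine (catPath_big ωs (revPath ξs) _ (by simp only [Fin.coe_castSucc, Fin.val_succ, Fin.coe_castAdd, Fin.coe_natAdd, Fin.val_last, Fin.val_zero] <;> omega)).trans ?_
      have e : (⟨((Fin.last (m + ℓ)) : ℕ) - m, by omega⟩ : Fin (ℓ + 1)) = Fin.last ℓ :=
        Fin.ext (by simp only [Fin.coe_castSucc, Fin.val_succ, Fin.coe_castAdd, Fin.coe_natAdd, Fin.val_last, Fin.val_zero] <;> omega)
      rw [e]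
      unfold revPath
      rw [Fin.rev_last, ← h0]
    have hF0 : F (catPath ωs (revPath ξs) 0) (catPath ωs (revPath ξs) (Fin.last (m + ℓ))) := by
      rw [hend0, hendlast]; exact hF.refl _
    have h1' := hINC (m + ℓ) _ hcyc hF0
    rw [pathProd_catPath φ ωs (revPath ξs) hj,
      pathProd_revPath φ hsym hrec h2] at h1'
    have hξpos := ppos ℓ ξs h2
    field_simp at h1'
    linarith
  refine ⟨key, ?_⟩
  refine ⟨fun ω ω' =>
    if h : ∃ p : (m : ℕ) × (Fin (m + 1) → Ω),
        IsPath E p.2 ∧ p.2 0 = ω ∧ p.2 (Fin.last p.1) = ω'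
    then pathProd φ h.choose.2 else 1, ?_, ?_⟩
  · intro ω ω' hed
    have hsing : IsPath E (![ω, ω'] : Fin 2 → Ω) := by
      intro i
      fin_cases i
      simpa using hed
    have hx : ∃ p : (m : ℕ) × (Fin (m + 1) → Ω),
        IsPath E p.2 ∧ p.2 0 = ω ∧ p.2 (Fin.last p.1) = ω' :=
      ⟨⟨1, ![ω, ω']⟩, hsing, by simp, by simp [Fin.last]⟩
    beta_reduce
    rw [dif_pos hx]
    obtain ⟨hp, h0, hl⟩ := hx.choose_spec
    have := key hx.choose.1 1 hx.choose.2 ![ω, ω'] hp hsing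
      (by simp [h0]) (by rw [hl]; simp [Fin.last])
    rw [this]
    simp [pathProd]
  · intro m ωs hωs
    have hx : ∃ p : (m' : ℕ) × (Fin (m' + 1) → Ω),
        IsPath E p.2 ∧ p.2 0 = ωs 0 ∧ p.2 (Fin.last p.1) = ωs (Fin.last m) :=
      ⟨⟨m, ωs⟩, hωs, rfl, rfl⟩
    beta_reduce
    rw [dif_pos hx]
    obtain ⟨hp, h0, hl⟩ := hx.choose_spec
    exact key m hx.choose.1 ωs hx.choose.2 hωs hp h0.symm hl.symm
end

section
/- Fix a posterior likelihood function φ on the graph of information G = (V, E). There exists an F-measurable, strictly positive function f : V → ℝ such that φ(ω, ω') = f(ω)/f(ω') for every edge (ω, ω') ∈ E, if and only if φ satisfies internal consistency [INC] and its extension (well defined by the extension lemma) satisfies external consistency [EXC]. -/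
open Finset

/-- `ω ↠ ω'`: there is a finite path of edges of `E` from `ω` to `ω'`. -/
def Reach {Ω : Type} (E : Ω → Ω → Prop) (ω ω' : Ω) : Prop :=
  ∃ (m : ℕ) (ωs : Fin (m + 1) → Ω), IsPath E ωs ∧ ωs 0 = ω ∧ ωs (Fin.last m) = ω'

/-- Internal consistency [INC]: the product of `φ` along every F-cycle equals 1. -/
def INCc {Ω : Type} (E F : Ω → Ω → Prop) (φ : Ω → Ω → ℝ) : Prop :=
  ∀ (m : ℕ) (ωs : Fin (m + 1) → Ω), IsPath E ωs → F (ωs 0) (ωs (Fin.last m)) →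
    pathProd φ ωs = 1

/-- External consistency [EXC] (for the extension of `φ` along paths):
for every F-loop `((ω_i, ω̄_i))_i`, the product of the extended values
`φ(ω_i, ω̄_i)` — computed as the product of `φ` along any connecting paths —
equals 1. -/
def EXCc {Ω : Type} (E F : Ω → Ω → Prop) (φ : Ω → Ω → ℝ) : Prop :=
  ∀ (m : ℕ) (a b : Fin (m + 1) → Ω),
    (∀ i, Reach E (a i) (b i)) →
    (∀ i, ¬ Reach E (b i) (a (i + 1))) →
    (∀ i, F (b i) (a (i + 1))) →
    ∀ (ms : Fin (m + 1) → ℕ) (p : ∀ i, Fin (ms i + 1) → Ω),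
      (∀ i, IsPath E (p i)) → (∀ i, p i 0 = a i) → (∀ i, p i (Fin.last (ms i)) = b i) →
      (∏ i, pathProd φ (p i)) = 1


/-! If `φ(ω, ω') = f ω / f ω'` on edges, products along paths telescope, which gives [INC] and
[EXC]. Conversely, [INC] with `F` reflexive says that `φ` has product one around closed walks, so
`φ(ω, ω') = g ω / g ω'` for a potential `g`, unique up to a positive factor on each connected
component. Within a component `g` is already constant on `F`-pairs (by [INC]), so it remains to
choose factors `c C` with `c C / c C' = g v / g u` whenever an `F`-pair `(u, v)` leads from the
component `C` to another one `C'`. [EXC] (for loops of length two) makes this prescribed ratio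
independent of the pair, and a closed walk in the graph of components so linked is an F-loop, so
[EXC] again gives product one around it, and `c` is a potential there; then `f = c · g`. -/

namespace PosteriorLikelihood

section Walks

variable {V : Type} {R : V → V → Prop} {w : V → V → ℝ}

inductive WalkProd (R : V → V → Prop) (w : V → V → ℝ) : V → V → ℝ → Prop
  | refl (x : V) : WalkProd R w x x 1
  | cons {x y z : V} {r : ℝ} : R x y → WalkProd R w y z r → WalkProd R w x z (w x y * r)

namespace WalkProd

theorem single {x y : V} (h : R x y) : WalkProd R w x y (w x y) := by
  simpa using cons (w := w) h (refl y)

theorem trans {x y z : V} {r s : ℝ} (h₁ : WalkProd R w x y r) (h₂ : WalkProd R w y z s) :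
    WalkProd R w x z (r * s) := by
  induction h₁ with
  | refl => simpa using h₂
  | cons hxy _ ih => simpa only [mul_assoc] using cons hxy (ih h₂)

theorem symm (hsym : ∀ ⦃x y⦄, R x y → R y x) (hinv : ∀ x y, R x y → w y x = (w x y)⁻¹)
    {x y : V} {r : ℝ} (h : WalkProd R w x y r) : WalkProd R w y x r⁻¹ := by
  induction h with
  | refl x => simpa using refl x
  | cons hxy _ ih =>
    rw [mul_inv_rev, ← hinv _ _ hxy]
    exact ih.trans (single (hsym hxy))

theorem pos (hpos : ∀ x y, R x y → 0 < w x y) {x y : V} {r : ℝ} (h : WalkProd R w x y r) :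
    0 < r := by
  induction h with
  | refl => exact one_pos
  | cons hxy _ ih => exact mul_pos (hpos _ _ hxy) ih

theorem eq_div {g : V → ℝ} (hg0 : ∀ v, g v ≠ 0) (hg : ∀ x y, R x y → w x y = g x / g y)
    {x y : V} {r : ℝ} (h : WalkProd R w x y r) : r = g x / g y := by
  induction h with
  | refl x => exact (div_self (hg0 x)).symm
  | cons hxy _ ih => rw [ih, hg _ _ hxy, div_mul_div_cancel₀ (hg0 _)]

end WalkProd

theorem isPath_cons {m : ℕ} (x : V) (ωs : Fin (m + 1) → V) :
    IsPath R (Fin.cons x ωs : Fin (m + 2) → V) ↔ R x (ωs 0) ∧ IsPath R ωs := by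
  simp [IsPath, Fin.forall_fin_succ]

theorem pathProd_cons {m : ℕ} (x : V) (ωs : Fin (m + 1) → V) :
    pathProd w (Fin.cons x ωs : Fin (m + 2) → V) = w x (ωs 0) * pathProd w ωs := by
  simp [pathProd, Fin.prod_univ_succ]

theorem walkProd_of_isPath {m : ℕ} {ωs : Fin (m + 1) → V} (h : IsPath R ωs) :
    WalkProd R w (ωs 0) (ωs (Fin.last m)) (pathProd w ωs) := by
  induction m with
  | zero => simpa [pathProd] using WalkProd.refl (R := R) (w := w) (ωs 0)
  | succ m ih =>
    cases ωs using Fin.consCases with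
    | cons x ηs =>
      rw [isPath_cons] at h
      rw [pathProd_cons, ← Fin.succ_last, Fin.cons_succ, Fin.cons_zero]
      exact .cons h.1 (ih h.2)

theorem WalkProd.exists_isPath {x y : V} {r : ℝ} (h : WalkProd R w x y r) :
    ∃ (m : ℕ) (ωs : Fin (m + 1) → V),
      IsPath R ωs ∧ ωs 0 = x ∧ ωs (Fin.last m) = y ∧ pathProd w ωs = r := by
  induction h with
  | refl x => exact ⟨0, fun _ => x, fun i => i.elim0, rfl, rfl, by simp [pathProd]⟩
  | @cons x _ _ _ hxy _ ih =>
    obtain ⟨m, ωs, hp, h0, hl, hr⟩ := ih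
    refine ⟨m + 1, Fin.cons x ωs, (isPath_cons x ωs).2 ⟨h0 ▸ hxy, hp⟩, rfl, ?_, ?_⟩
    · rw [← Fin.succ_last, Fin.cons_succ, hl]
    · rw [pathProd_cons, h0, hr]

theorem pathProd_eq_div {g : V → ℝ} (hg0 : ∀ v, g v ≠ 0) (hg : ∀ x y, R x y → w x y = g x / g y)
    {m : ℕ} {ωs : Fin (m + 1) → V} (h : IsPath R ωs) :
    pathProd w ωs = g (ωs 0) / g (ωs (Fin.last m)) :=
  (walkProd_of_isPath h).eq_div hg0 hg

theorem reach_iff_exists_walkProd (w : V → V → ℝ) {x y : V} :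
    Reach R x y ↔ ∃ r, WalkProd R w x y r := by
  constructor
  · rintro ⟨m, ωs, hp, rfl, rfl⟩
    exact ⟨_, walkProd_of_isPath hp⟩
  · rintro ⟨r, h⟩
    obtain ⟨m, ωs, hp, h0, hl, -⟩ := h.exists_isPath
    exact ⟨m, ωs, hp, h0, hl⟩

theorem reach_of_rel {x y : V} (h : R x y) : Reach R x y :=
  (reach_iff_exists_walkProd fun _ _ => 1).2 ⟨_, .single h⟩

theorem reach_equivalence (hsym : ∀ ⦃x y⦄, R x y → R y x) : Equivalence (Reach R) := by
  have hw {x y : V} := reach_iff_exists_walkProd (R := R) (x := x) (y := y) fun _ _ => (1 : ℝ)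
  refine ⟨fun x => hw.2 ⟨1, .refl x⟩, fun h => ?_, fun h₁ h₂ => ?_⟩
  · obtain ⟨_, h⟩ := hw.1 h
    exact hw.2 ⟨_, h.symm hsym fun _ _ _ => inv_one.symm⟩
  · obtain ⟨_, h₁⟩ := hw.1 h₁
    obtain ⟨_, h₂⟩ := hw.1 h₂
    exact hw.2 ⟨_, h₁.trans h₂⟩

def reachSetoid (hsym : ∀ ⦃x y⦄, R x y → R y x) : Setoid V :=
  ⟨Reach R, reach_equivalence hsym⟩

-- `INCc R (· = ·) w`: the `w`-product along every closed `R`-path is one.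
theorem exists_potential (hsym : ∀ ⦃x y⦄, R x y → R y x) (hpos : ∀ x y, R x y → 0 < w x y)
    (hinv : ∀ x y, R x y → w y x = (w x y)⁻¹) (hcyc : INCc R (· = ·) w) :
    ∃ g : V → ℝ, (∀ v, 0 < g v) ∧ ∀ x y, R x y → w x y = g x / g y := by
  have huniq : ∀ {x y r s}, WalkProd R w x y r → WalkProd R w x y s → r = s := by
    intro x y r s hr hs
    obtain ⟨m, ωs, hp, h0, hl, hprod⟩ := (hr.trans (hs.symm hsym hinv)).exists_isPath
    rw [← mul_inv_eq_one₀ (hs.pos hpos).ne', ← hprod]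
    exact hcyc m ωs hp (h0.trans hl.symm)
  let S := reachSetoid hsym
  have hbase : ∀ v, ∃ r, WalkProd R w (Quotient.mk S v).out v r :=
    fun v => (reach_iff_exists_walkProd w).1 (Quotient.mk_out v)
  choose r hr using hbase
  refine ⟨fun v => (r v)⁻¹, fun v => inv_pos.2 ((hr v).pos hpos), fun x y hxy => ?_⟩
  have hout : (Quotient.mk S x).out = (Quotient.mk S y).out :=
    congrArg _ (Quotient.sound (reach_of_rel hxy))
  have hry : r y = r x * w x y := huniq (hr y) (hout ▸ (hr x).trans (.single hxy))
  have hrx : r x ≠ 0 := ((hr x).pos hpos).ne'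
  show w x y = (r x)⁻¹ / (r y)⁻¹
  rw [hry, inv_div_inv, mul_div_cancel_left₀ _ hrx]

end Walks

theorem succ_eq_castSucc_add_one_of_closed {α : Type} {k : ℕ} {ωs : Fin (k + 2) → α}
    (h : ωs 0 = ωs (Fin.last (k + 1))) (i : Fin (k + 1)) : ωs i.succ = ωs (i + 1).castSucc := by
  rcases Fin.eq_castSucc_or_eq_last i with ⟨j, rfl⟩ | rfl
  · rw [Fin.coeSucc_eq_succ, Fin.succ_castSucc]
  · rw [Fin.succ_last, Fin.last_add_one, Fin.castSucc_zero, h]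

section Consistency

variable {Ω : Type} {E F : Ω → Ω → Prop} {φ : Ω → Ω → ℝ}

theorem INCc_of_potential {f : Ω → ℝ} (hf0 : ∀ ω, f ω ≠ 0) (hfF : ∀ x y, F x y → f x = f y)
    (hf : ∀ x y, E x y → φ x y = f x / f y) : INCc E F φ := by
  intro m ωs hp hF
  rw [pathProd_eq_div hf0 hf hp, hfF _ _ hF, div_self (hf0 _)]

theorem EXCc_of_potential {f : Ω → ℝ} (hf0 : ∀ ω, f ω ≠ 0) (hfF : ∀ x y, F x y → f x = f y)
    (hf : ∀ x y, E x y → φ x y = f x / f y) : EXCc E F φ := by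
  intro m a b _ _ hba ms p hp hp0 hpl
  simp_rw [pathProd_eq_div hf0 hf (hp _), hp0, hpl, fun i => hfF _ _ (hba i), prod_div_distrib]
  rw [Fintype.prod_equiv (Equiv.addRight 1) (fun i => f (a (i + 1))) (fun i => f (a i))
    fun _ => rfl]
  exact div_self (prod_ne_zero_iff.2 fun i _ => hf0 (a i))

theorem INCc.eq_of_reach (hinc : INCc E F φ) {g : Ω → ℝ} (hg0 : ∀ ω, g ω ≠ 0)
    (hg : ∀ x y, E x y → φ x y = g x / g y) {u v : Ω} (hF : F u v) (hr : Reach E u v) :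
    g u = g v := by
  obtain ⟨m, ωs, hp, rfl, rfl⟩ := hr
  have h := hinc m ωs hp hF
  rwa [pathProd_eq_div hg0 hg hp, div_eq_one_iff_eq (hg0 _)] at h

theorem EXCc.prod_div_eq_one (hexc : EXCc E F φ) {g : Ω → ℝ} (hg0 : ∀ ω, g ω ≠ 0)
    (hg : ∀ x y, E x y → φ x y = g x / g y) {m : ℕ} {u v : Fin (m + 1) → Ω}
    (hF : ∀ i, F (u i) (v i)) (hcross : ∀ i, ¬ Reach E (u i) (v i))
    (hreach : ∀ i, Reach E (v i) (u (i + 1))) : ∏ i, g (v i) / g (u i) = 1 := by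
  choose ms p hp hp0 hpl using hreach
  have h := hexc m v (fun i => u (i + 1)) (fun i => ⟨ms i, p i, hp i, hp0 i, hpl i⟩)
    (fun i => hcross (i + 1)) (fun i => hF (i + 1)) ms p hp hp0 hpl
  simp_rw [pathProd_eq_div hg0 hg (hp _), hp0, hpl, prod_div_distrib] at h
  rwa [prod_div_distrib, ← Fintype.prod_equiv (Equiv.addRight 1) (fun i => g (u (i + 1)))
    (fun i => g (u i)) fun _ => rfl]

theorem EXCc.div_eq_div (hexc : EXCc E F φ) (hE : ∀ ⦃x y⦄, E x y → E y x)
    (hFsymm : ∀ ⦃x y⦄, F x y → F y x) {g : Ω → ℝ} (hg0 : ∀ ω, g ω ≠ 0)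
    (hg : ∀ x y, E x y → φ x y = g x / g y) {u₁ v₁ u₂ v₂ : Ω} (h₁ : F u₁ v₁) (h₂ : F u₂ v₂)
    (hcross : ¬ Reach E u₁ v₁) (hu : Reach E u₁ u₂) (hv : Reach E v₁ v₂) :
    g v₁ / g u₁ = g v₂ / g u₂ := by
  have hR := reach_equivalence hE
  have h := EXCc.prod_div_eq_one hexc hg0 hg (u := ![u₁, v₂]) (v := ![v₁, u₂])
    (Fin.forall_fin_two.2 ⟨h₁, hFsymm h₂⟩)
    (Fin.forall_fin_two.2 ⟨hcross, fun (h : Reach E v₂ u₂) =>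
      hcross (hR.trans (hR.trans hu (hR.symm h)) (hR.symm hv))⟩)
    (Fin.forall_fin_two.2 ⟨hv, hR.symm hu⟩)
  rw [Fin.prod_univ_two] at h
  change g v₁ / g u₁ * (g u₂ / g v₂) = 1 at h
  rw [eq_inv_of_mul_eq_one_left h, inv_div]

end Consistency

section Components

variable {Ω : Type} {E F : Ω → Ω → Prop} {φ : Ω → Ω → ℝ} {g : Ω → ℝ}

def CrossLinked (hE : ∀ ⦃x y⦄, E x y → E y x) (F : Ω → Ω → Prop) :
    Quotient (reachSetoid hE) → Quotient (reachSetoid hE) → Prop :=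
  Relation.Map (fun u v => F u v ∧ ¬ Reach E u v) (Quotient.mk _) (Quotient.mk _)

theorem exists_crossRatio (hE : ∀ ⦃x y⦄, E x y → E y x) (hFsymm : ∀ ⦃x y⦄, F x y → F y x)
    (hexc : EXCc E F φ) (hgpos : ∀ ω, 0 < g ω) (hg : ∀ x y, E x y → φ x y = g x / g y) :
    ∃ ρ : Quotient (reachSetoid hE) → Quotient (reachSetoid hE) → ℝ, (∀ C C', 0 < ρ C C') ∧
      ∀ u v, F u v → ¬ Reach E u v → ρ ⟦u⟧ ⟦v⟧ = g v / g u := by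
  have hρ : ∀ C C' : Quotient (reachSetoid hE), ∃ r, 0 < r ∧
      ∀ u v, F u v → ¬ Reach E u v → ⟦u⟧ = C → ⟦v⟧ = C' → r = g v / g u := by
    intro C C'
    by_cases hlink : ∃ u v, F u v ∧ ¬ Reach E u v ∧ ⟦u⟧ = C ∧ ⟦v⟧ = C'
    · obtain ⟨u₀, v₀, hF₀, hcross₀, rfl, rfl⟩ := hlink
      refine ⟨g v₀ / g u₀, div_pos (hgpos v₀) (hgpos u₀), fun u v hF _ hu hv => ?_⟩
      exact EXCc.div_eq_div hexc hE hFsymm (fun ω => (hgpos ω).ne') hg hF₀ hF hcross₀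
        (Quotient.exact hu.symm) (Quotient.exact hv.symm)
    · exact ⟨1, one_pos, fun u v hF hcross hu hv => (hlink ⟨u, v, hF, hcross, hu, hv⟩).elim⟩
  choose ρ hρpos hρ using hρ
  exact ⟨ρ, hρpos, fun u v hF hcross => hρ _ _ u v hF hcross rfl rfl⟩

theorem exists_componentScaling (hE : ∀ ⦃x y⦄, E x y → E y x)
    (hFsymm : ∀ ⦃x y⦄, F x y → F y x) (hexc : EXCc E F φ) (hgpos : ∀ ω, 0 < g ω)
    (hg : ∀ x y, E x y → φ x y = g x / g y) :
    ∃ c : Quotient (reachSetoid hE) → ℝ, (∀ C, 0 < c C) ∧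
      ∀ u v, F u v → ¬ Reach E u v → c ⟦u⟧ * g u = c ⟦v⟧ * g v := by
  have hR := reach_equivalence hE
  obtain ⟨ρ, hρpos, hρ⟩ := exists_crossRatio hE hFsymm hexc hgpos hg
  have hsymm : ∀ ⦃C C'⦄, CrossLinked hE F C C' → CrossLinked hE F C' C := by
    rintro _ _ ⟨u, v, ⟨hF, hcross⟩, rfl, rfl⟩
    exact ⟨v, u, ⟨hFsymm hF, fun h => hcross (hR.symm h)⟩, rfl, rfl⟩
  have hinv : ∀ C C', CrossLinked hE F C C' → ρ C' C = (ρ C C')⁻¹ := by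
    rintro _ _ ⟨u, v, ⟨hF, hcross⟩, rfl, rfl⟩
    rw [hρ u v hF hcross, hρ v u (hFsymm hF) fun h => hcross (hR.symm h), inv_div]
  have hcyc : INCc (CrossLinked hE F) (· = ·) ρ := by
    rintro (_ | k) ωs hp hclosed
    · simp [pathProd]
    choose u v huv hu hv using hp
    calc pathProd ρ ωs = ∏ i, g (v i) / g (u i) :=
          prod_congr rfl fun i _ => by rw [← hu i, ← hv i, hρ _ _ (huv i).1 (huv i).2]
      _ = 1 := EXCc.prod_div_eq_one hexc (fun ω => (hgpos ω).ne') hg (fun i => (huv i).1)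
          (fun i => (huv i).2) fun i => Quotient.exact <| (hv i).trans <|
            (succ_eq_castSucc_add_one_of_closed hclosed i).trans (hu (i + 1)).symm
  obtain ⟨c, hcpos, hc⟩ := exists_potential hsymm (fun _ _ _ => hρpos _ _) hinv hcyc
  refine ⟨c, hcpos, fun u v hF hcross => ?_⟩
  have h := hc _ _ ⟨u, v, ⟨hF, hcross⟩, rfl, rfl⟩
  rw [hρ u v hF hcross, div_eq_div_iff (hgpos u).ne' (hcpos _).ne'] at h
  linarith

theorem exists_potential_of_INCc_of_EXCc (hE : ∀ ⦃x y⦄, E x y → E y x) (hF : Equivalence F)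
    (hpos : ∀ x y, E x y → 0 < φ x y) (hinv : ∀ x y, E x y → φ y x = (φ x y)⁻¹)
    (hinc : INCc E F φ) (hexc : EXCc E F φ) :
    ∃ f : Ω → ℝ, (∀ ω, 0 < f ω) ∧ (∀ ω ω', F ω ω' → f ω = f ω') ∧
      ∀ ω ω', E ω ω' → φ ω ω' = f ω / f ω' := by
  obtain ⟨g, hgpos, hg⟩ :=
    exists_potential hE hpos hinv fun m ωs hp h => hinc m ωs hp (h ▸ hF.refl _)
  obtain ⟨c, hcpos, hc⟩ := exists_componentScaling hE (fun _ _ => hF.symm) hexc hgpos hg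
  have hmk {x y : Ω} (h : Reach E x y) : (⟦x⟧ : Quotient (reachSetoid hE)) = ⟦y⟧ :=
    Quotient.sound h
  refine ⟨fun ω => c ⟦ω⟧ * g ω, fun ω => mul_pos (hcpos _) (hgpos ω), fun u v hF => ?_,
    fun x y hxy => ?_⟩
  · by_cases hr : Reach E u v
    · simp only [hmk hr, INCc.eq_of_reach hinc (fun ω => (hgpos ω).ne') hg hF hr]
    · exact hc u v hF hr
  · simp only [hmk (reach_of_rel hxy), mul_div_mul_left _ _ (hcpos _).ne', hg x y hxy]

end Components

end PosteriorLikelihood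

open PosteriorLikelihood in
theorem stmt_1_general {Ω : Type} {n : ℕ}
    (P : Fin n → Ω → Ω → Prop) (hP : ∀ i, Equivalence (P i))
    (F : Ω → Ω → Prop) (hF : Equivalence F)
    (E : Ω → Ω → Prop) (hE : ∀ ω ω', E ω ω' ↔ ∃ i, P i ω ω')
    (φ : Ω → Ω → ℝ)
    (hpos : ∀ ω ω', E ω ω' → 0 < φ ω ω')
    (hrec : ∀ ω ω', E ω ω' → φ ω ω' = 1 / φ ω' ω) :
    (∃ f : Ω → ℝ, (∀ ω, 0 < f ω) ∧ (∀ ω ω', F ω ω' → f ω = f ω') ∧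
      (∀ ω ω', E ω ω' → φ ω ω' = f ω / f ω')) ↔
    (INCc E F φ ∧ EXCc E F φ) := by
  have hEsymm : ∀ ⦃x y⦄, E x y → E y x := fun x y h =>
    (hE y x).2 (((hE x y).1 h).imp fun i => (hP i).symm)
  have hinv : ∀ x y, E x y → φ y x = (φ x y)⁻¹ := fun x y h => by
    rw [hrec y x (hEsymm h), one_div]
  constructor
  · rintro ⟨f, hfpos, hfF, hf⟩
    have hf0 : ∀ ω, f ω ≠ 0 := fun ω => (hfpos ω).ne'
    exact ⟨INCc_of_potential hf0 hfF hf, EXCc_of_potential hf0 hfF hf⟩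
  · rintro ⟨hinc, hexc⟩
    exact exists_potential_of_INCc_of_EXCc hEsymm hF hpos hinv hinc hexc

/-- Theorem 1: there is an F-measurable strictly positive `f` with
`φ(ω,ω') = f(ω)/f(ω')` on every edge iff `φ` satisfies [INC] and its extension
satisfies [EXC]. -/
theorem stmt_1 {Ω : Type} [Fintype Ω] [Nonempty Ω] {n : ℕ} (hn : 2 ≤ n)
    (P : Fin n → Ω → Ω → Prop) (hP : ∀ i, Equivalence (P i))
    (F : Ω → Ω → Prop) (hF : Equivalence F)
    (E : Ω → Ω → Prop) (hE : ∀ ω ω', E ω ω' ↔ ∃ i, P i ω ω')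
    (φ : Ω → Ω → ℝ)
    (hpos : ∀ ω ω', E ω ω' → 0 < φ ω ω')
    (hrec : ∀ ω ω', E ω ω' → φ ω ω' = 1 / φ ω' ω) :
    (∃ f : Ω → ℝ, (∀ ω, 0 < f ω) ∧ (∀ ω ω', F ω ω' → f ω = f ω') ∧
      (∀ ω ω', E ω ω' → φ ω ω' = f ω / f ω')) ↔
    (INCc E F φ ∧ EXCc E F φ) :=
  stmt_1_general P hP F hF E hE φ hpos hrec
end

section
/- Assume the posterior likelihood function φ satisfies internal consistency [INC]. Then for every connected component C of the graph of information G there exists a strictly positive function f_C : C → ℝ such that φ(ω, ω') = f_C(ω)/f_C(ω') for every edge (ω, ω') ∈ E with ω, ω' ∈ C, and f_C is F-measurable on C, i.e., f_C(ω) = f_C(ω') whenever ω, ω' ∈ C and ω' ∈ F(ω). -/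
open Finset

/-!
Fix `ω₀ ∈ C` and let `f ω` be the product of `φ` along any path from `ω` to `ω₀`. This is
well defined: if `q` is the product along a path from `ω₀` to `ω`, then [INC] applied to the
two cycles at `ω₀` obtained by composing gives `q r = 1 = q s` for any two such products `r, s`.
Prepending an edge `(ω, ω')` gives `f ω = φ ω ω' * f ω'`, and prepending a path from `ω` to an
`F`-equivalent `ω'`, whose product is `1` by [INC], gives `f ω = f ω'`.
-/

inductive WalkWeight {Ω : Type} (E : Ω → Ω → Prop) (φ : Ω → Ω → ℝ) : Ω → Ω → ℝ → Prop
  | nil (a : Ω) : WalkWeight E φ a a 1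
  | cons {a b c : Ω} {r : ℝ} : E a b → WalkWeight E φ b c r → WalkWeight E φ a c (φ a b * r)

namespace WalkWeight

variable {Ω : Type} {E F : Ω → Ω → Prop} {φ : Ω → Ω → ℝ} {a b c : Ω} {q r s : ℝ}

theorem trans (h₁ : WalkWeight E φ a b r) (h₂ : WalkWeight E φ b c s) :
    WalkWeight E φ a c (r * s) := by
  induction h₁ with
  | nil => simpa using h₂
  | cons hab _ ih => simpa only [mul_assoc] using cons hab (ih h₂)

theorem pos (hpos : ∀ ω ω', E ω ω' → 0 < φ ω ω') (h : WalkWeight E φ a b r) : 0 < r := by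
  induction h with
  | nil => exact one_pos
  | cons hab _ ih => exact mul_pos (hpos _ _ hab) ih

theorem of_isPath {m : ℕ} {ωs : Fin (m + 1) → Ω} (hωs : IsPath E ωs) :
    WalkWeight E φ (ωs 0) (ωs (Fin.last m)) (pathProd φ ωs) := by
  induction m with
  | zero => simpa [pathProd] using nil (ωs 0)
  | succ m ih =>
    have htail : IsPath E (Fin.tail ωs) := fun i => by
      simpa only [Fin.tail, ← Fin.succ_castSucc] using hωs i.succ
    have hprod : pathProd φ ωs = φ (ωs 0) (ωs 1) * pathProd φ (Fin.tail ωs) := by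
      simp only [pathProd, Fin.prod_univ_succ, Fin.tail, Fin.succ_castSucc]
      rfl
    rw [hprod]
    exact cons (hωs 0) (ih htail)

theorem exists_isPath (h : WalkWeight E φ a b r) :
    ∃ (m : ℕ) (ωs : Fin (m + 1) → Ω), IsPath E ωs ∧ ωs 0 = a ∧ ωs (Fin.last m) = b ∧
      pathProd φ ωs = r := by
  induction h with
  | @nil a => exact ⟨0, fun _ => a, fun i => i.elim0, rfl, rfl, by simp [pathProd]⟩
  | @cons a b c r hab _ ih =>
    obtain ⟨m, ωs, hωs, h0, hlast, hprod⟩ := ih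
    refine ⟨m + 1, Fin.cons a ωs, fun i => ?_, rfl, hlast, ?_⟩
    · cases i using Fin.cases with
      | zero => simpa [← h0] using hab
      | succ i => simpa [← Fin.succ_castSucc] using hωs i
    · simp only [pathProd, Fin.prod_univ_succ, Fin.cons_succ, ← hprod,
        ← Fin.succ_castSucc, h0]
      rfl

theorem eq_one_of_INCc (hINC : INCc E F φ) (h : WalkWeight E φ a b r) (hab : F a b) : r = 1 := by
  obtain ⟨m, ωs, hωs, rfl, rfl, rfl⟩ := h.exists_isPath
  exact hINC m ωs hωs hab

theorem unique_of_INCc (hINC : INCc E F φ) (hb : F b b) (hq : WalkWeight E φ b a q)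
    (hr : WalkWeight E φ a b r) (hs : WalkWeight E φ a b s) : r = s := by
  have hqr : q * r = 1 := (hq.trans hr).eq_one_of_INCc hINC hb
  have hqs : q * s = 1 := (hq.trans hs).eq_one_of_INCc hINC hb
  exact mul_left_cancel₀ (left_ne_zero_of_mul_eq_one hqr) (hqr.trans hqs.symm)

end WalkWeight

theorem Reach.exists_walkWeight {Ω : Type} {E : Ω → Ω → Prop} (φ : Ω → Ω → ℝ) {a b : Ω}
    (h : Reach E a b) : ∃ r, WalkWeight E φ a b r := by
  obtain ⟨m, ωs, hωs, rfl, rfl⟩ := h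
  exact ⟨_, WalkWeight.of_isPath hωs⟩

theorem stmt_2_general {Ω : Type}
    (F : Ω → Ω → Prop) (hF : Equivalence F)
    (E : Ω → Ω → Prop)
    (φ : Ω → Ω → ℝ)
    (hpos : ∀ ω ω', E ω ω' → 0 < φ ω ω')
    (hINC : INCc E F φ)
    -- `C` is a connected component: nonempty, pairwise connected and maximal
    (C : Set Ω) (hC1 : C.Nonempty)
    (hC2 : ∀ ω ∈ C, ∀ ω' ∈ C, Reach E ω ω') :
    ∃ f : Ω → ℝ, (∀ ω ∈ C, 0 < f ω) ∧
      (∀ ω ω', ω ∈ C → ω' ∈ C → E ω ω' → φ ω ω' = f ω / f ω') ∧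
      (∀ ω ω', ω ∈ C → ω' ∈ C → F ω ω' → f ω = f ω') := by
  obtain ⟨ω₀, hω₀⟩ := hC1
  have hweight : ∀ ω, ∃ r, ω ∈ C → WalkWeight E φ ω ω₀ r := fun ω => by
    by_cases hω : ω ∈ C
    · obtain ⟨r, hr⟩ := (hC2 ω hω ω₀ hω₀).exists_walkWeight φ
      exact ⟨r, fun _ => hr⟩
    · exact ⟨1, fun h => absurd h hω⟩
  choose f hf using hweight
  have hunique : ∀ ω ∈ C, ∀ {r}, WalkWeight E φ ω ω₀ r → f ω = r := fun ω hω r hr => by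
    obtain ⟨q, hq⟩ := (hC2 ω₀ hω₀ ω hω).exists_walkWeight φ
    exact WalkWeight.unique_of_INCc hINC (hF.refl ω₀) hq (hf ω hω) hr
  refine ⟨f, fun ω hω => (hf ω hω).pos hpos, fun ω ω' hω hω' hedge => ?_,
    fun ω ω' hω hω' hF' => ?_⟩
  · have hf' : f ω = φ ω ω' * f ω' := hunique ω hω (.cons hedge (hf ω' hω'))
    rw [hf', mul_div_cancel_right₀ _ ((hf ω' hω').pos hpos).ne']
  · obtain ⟨t, ht⟩ := (hC2 ω hω ω' hω').exists_walkWeight φ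
    rw [hunique ω hω (ht.trans (hf ω' hω')), ht.eq_one_of_INCc hINC hF', one_mul]

/-- under [INC], every connected component `C` carries a strictly
positive function `f_C` representing `φ` as a ratio on edges within `C`, which
is moreover F-measurable on `C`. -/
theorem stmt_2 {Ω : Type} [Fintype Ω] [Nonempty Ω] {n : ℕ} (hn : 2 ≤ n)
    (P : Fin n → Ω → Ω → Prop) (hP : ∀ i, Equivalence (P i))
    (F : Ω → Ω → Prop) (hF : Equivalence F)
    (E : Ω → Ω → Prop) (hE : ∀ ω ω', E ω ω' ↔ ∃ i, P i ω ω')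
    (φ : Ω → Ω → ℝ)
    (hpos : ∀ ω ω', E ω ω' → 0 < φ ω ω')
    (hrec : ∀ ω ω', E ω ω' → φ ω ω' = 1 / φ ω' ω)
    (hINC : INCc E F φ)
    -- `C` is a connected component: nonempty, pairwise connected and maximal
    (C : Set Ω) (hC1 : C.Nonempty)
    (hC2 : ∀ ω ∈ C, ∀ ω' ∈ C, Reach E ω ω')
    (hC3 : ∀ ω ∈ C, ∀ ω', Reach E ω ω' → ω' ∈ C) :
    ∃ f : Ω → ℝ, (∀ ω ∈ C, 0 < f ω) ∧
      (∀ ω ω', ω ∈ C → ω' ∈ C → E ω ω' → φ ω ω' = f ω / f ω') ∧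
      (∀ ω ω', ω ∈ C → ω' ∈ C → F ω ω' → f ω = f ω') :=
  stmt_2_general F hF E φ hpos hINC C hC1 hC2
end

section
/- Assume the posterior likelihood function φ satisfies internal consistency [INC], and let C be a connected component of the graph of information G, with φ extended to all pairs of states in C. Then for every ω' ∈ C, the value μ_φ(ω' | C) := φ(ω', ω) / Σ_{ω'' ∈ C} φ(ω'', ω) does not depend on the choice of the base state ω ∈ C, and μ_φ(· | C) is a probability distribution on C. -/
open Finset

/-! The extension `Φ` is multiplicative along concatenated paths, `Φ a c = Φ a b * Φ b c`.
Hence changing the base state from `ω₁` to `ω` multiplies every `Φ ω' ω₁` by the same positive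
factor `Φ ω₁ ω`, which cancels in the normalization; positivity of `φ` makes every `Φ ω' ω`
positive, so the normalized values form a probability distribution on `C`. -/

def IsPathExtension {Ω : Type} (E : Ω → Ω → Prop) (φ Φ : Ω → Ω → ℝ) : Prop :=
  ∀ (m : ℕ) (ωs : Fin (m + 1) → Ω), IsPath E ωs → Φ (ωs 0) (ωs (Fin.last m)) = pathProd φ ωs

section Paths

variable {Ω : Type} {E : Ω → Ω → Prop} {m : ℕ}

theorem snoc_apply_zero (ωs : Fin (m + 1) → Ω) (c : Ω) :
    (Fin.snoc ωs c : Fin (m + 2) → Ω) 0 = ωs 0 :=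
  Fin.snoc_castSucc (α := fun _ => Ω) c ωs 0

theorem snoc_apply_succ_castSucc (ωs : Fin (m + 1) → Ω) (c : Ω) (j : Fin m) :
    (Fin.snoc ωs c : Fin (m + 2) → Ω) j.castSucc.succ = ωs j.succ := by
  rw [Fin.succ_castSucc, Fin.snoc_castSucc]

theorem snoc_apply_succ_last (ωs : Fin (m + 1) → Ω) (c : Ω) :
    (Fin.snoc ωs c : Fin (m + 2) → Ω) (Fin.last m).succ = c := by
  rw [Fin.succ_last, Fin.snoc_last]

theorem IsPath.snoc {ωs : Fin (m + 1) → Ω} (hp : IsPath E ωs) {c : Ω}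
    (he : E (ωs (Fin.last m)) c) : IsPath E (Fin.snoc ωs c : Fin (m + 2) → Ω) := by
  intro i
  induction i using Fin.lastCases with
  | last => rwa [Fin.snoc_castSucc, snoc_apply_succ_last]
  | cast j => rw [Fin.snoc_castSucc, snoc_apply_succ_castSucc]; exact hp j

theorem IsPath.init {ωs : Fin (m + 2) → Ω} (hp : IsPath E ωs) : IsPath E (Fin.init ωs) := by
  intro i
  have h := hp i.castSucc
  rwa [Fin.succ_castSucc] at h

theorem pathProd_snoc (φ : Ω → Ω → ℝ) (ωs : Fin (m + 1) → Ω) (c : Ω) :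
    pathProd φ (Fin.snoc ωs c : Fin (m + 2) → Ω) = pathProd φ ωs * φ (ωs (Fin.last m)) c := by
  simp only [pathProd, Fin.prod_univ_castSucc, Fin.snoc_castSucc, snoc_apply_succ_castSucc,
    snoc_apply_succ_last]

theorem Reach.refl (a : Ω) : Reach E a a :=
  ⟨0, fun _ => a, fun i => i.elim0, rfl, rfl⟩

theorem Reach.tail {a b c : Ω} (hab : Reach E a b) (he : E b c) : Reach E a c := by
  obtain ⟨m, ωs, hp, rfl, rfl⟩ := hab
  exact ⟨m + 1, Fin.snoc ωs c, hp.snoc he, snoc_apply_zero ωs c, Fin.snoc_last _ _⟩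

theorem reach_iff_reflTransGen {a b : Ω} : Reach E a b ↔ Relation.ReflTransGen E a b := by
  constructor
  · rintro ⟨m, ωs, hp, rfl, rfl⟩
    induction m with
    | zero => rfl
    | succ m ih => exact (ih (Fin.init ωs) hp.init).tail (hp (Fin.last m))
  · intro h
    induction h with
    | refl => exact Reach.refl a
    | tail _ he ih => exact ih.tail he

theorem Reach.trans {a b c : Ω} (hab : Reach E a b) (hbc : Reach E b c) : Reach E a c :=
  reach_iff_reflTransGen.mpr
    ((reach_iff_reflTransGen.mp hab).trans (reach_iff_reflTransGen.mp hbc))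

end Paths

namespace IsPathExtension

variable {Ω : Type} {E : Ω → Ω → Prop} {φ Φ : Ω → Ω → ℝ}

theorem self_eq_one (hΦ : IsPathExtension E φ Φ) (a : Ω) : Φ a a = 1 := by
  simpa [pathProd] using hΦ 0 (fun _ => a) (fun i => i.elim0)

theorem pos (hΦ : IsPathExtension E φ Φ) (hpos : ∀ ω ω', E ω ω' → 0 < φ ω ω') {a b : Ω}
    (hab : Reach E a b) : 0 < Φ a b := by
  obtain ⟨m, ωs, hp, rfl, rfl⟩ := hab
  rw [hΦ m ωs hp]
  exact Finset.prod_pos fun i _ => hpos _ _ (hp i)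

theorem mul_of_edge (hΦ : IsPathExtension E φ Φ) {a b c : Ω} (hab : Reach E a b)
    (he : E b c) : Φ a c = Φ a b * φ b c := by
  obtain ⟨m, ωs, hp, rfl, rfl⟩ := hab
  have hsnoc := hΦ (m + 1) (Fin.snoc ωs c) (hp.snoc he)
  rw [snoc_apply_zero, Fin.snoc_last] at hsnoc
  rw [hsnoc, pathProd_snoc, hΦ m ωs hp]

theorem mul (hΦ : IsPathExtension E φ Φ) {a b c : Ω} (hab : Reach E a b) (hbc : Reach E b c) :
    Φ a c = Φ a b * Φ b c := by
  induction reach_iff_reflTransGen.mp hbc with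
  | refl => rw [hΦ.self_eq_one, mul_one]
  | @tail d c hbd hdc ih =>
    have hbd := reach_iff_reflTransGen.mpr hbd
    rw [hΦ.mul_of_edge (hab.trans hbd) hdc, ih hbd, hΦ.mul_of_edge hbd hdc, mul_assoc]

end IsPathExtension

theorem stmt_3_general {Ω : Type}
    (E : Ω → Ω → Prop)
    (φ : Ω → Ω → ℝ)
    (hpos : ∀ ω ω', E ω ω' → 0 < φ ω ω')
    -- `C` is a connected component: nonempty, pairwise connected and maximal
    (C : Finset Ω) (hC1 : C.Nonempty)
    (hC2 : ∀ ω ∈ C, ∀ ω' ∈ C, Reach E ω ω')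
    -- `Φ` is the extension of `φ` along paths (in particular `Φ ω ω = 1`)
    (Φ : Ω → Ω → ℝ)
    (hΦ : ∀ (m : ℕ) (ωs : Fin (m + 1) → Ω), IsPath E ωs →
      Φ (ωs 0) (ωs (Fin.last m)) = pathProd φ ωs) :
    ∀ ω ∈ C, ∀ ω₁ ∈ C,
      (∀ ω' ∈ C, Φ ω' ω / (∑ ω'' ∈ C, Φ ω'' ω) = Φ ω' ω₁ / (∑ ω'' ∈ C, Φ ω'' ω₁)) ∧
      (∀ ω' ∈ C, 0 ≤ Φ ω' ω / (∑ ω'' ∈ C, Φ ω'' ω)) ∧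
      ((∑ ω' ∈ C, Φ ω' ω / (∑ ω'' ∈ C, Φ ω'' ω)) = 1) := by
  have hΦ : IsPathExtension E φ Φ := hΦ
  intro ω hω ω₁ hω₁
  have hΦpos : ∀ x ∈ C, ∀ y ∈ C, 0 < Φ x y := fun x hx y hy => hΦ.pos hpos (hC2 x hx y hy)
  have hsum_pos : 0 < ∑ ω'' ∈ C, Φ ω'' ω := Finset.sum_pos (fun x hx => hΦpos x hx ω hω) hC1
  have hrebase : ∀ x ∈ C, Φ x ω = Φ x ω₁ * Φ ω₁ ω := fun x hx =>
    hΦ.mul (hC2 x hx ω₁ hω₁) (hC2 ω₁ hω₁ ω hω)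
  refine ⟨fun ω' hω' => ?_, fun ω' hω' => (div_pos (hΦpos ω' hω' ω hω) hsum_pos).le, ?_⟩
  · rw [Finset.sum_congr rfl hrebase, ← Finset.sum_mul, hrebase ω' hω',
      mul_div_mul_right _ _ (hΦpos ω₁ hω₁ ω hω).ne']
  · rw [← Finset.sum_div, div_self hsum_pos.ne']

/-- under [INC], for a connected component `C` and the extension `Φ`
of `φ` along paths (note `Φ ω ω = 1`), the value
`μ_φ(ω'|C) = Φ ω' ω / ∑_{ω''∈C} Φ ω'' ω` does not depend on the base state
`ω ∈ C`, and `μ_φ(·|C)` is a probability distribution on `C`. -/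
theorem stmt_3 {Ω : Type} [Fintype Ω] [Nonempty Ω] {n : ℕ} (hn : 2 ≤ n)
    (P : Fin n → Ω → Ω → Prop) (hP : ∀ i, Equivalence (P i))
    (F : Ω → Ω → Prop) (hF : Equivalence F)
    (E : Ω → Ω → Prop) (hE : ∀ ω ω', E ω ω' ↔ ∃ i, P i ω ω')
    (φ : Ω → Ω → ℝ)
    (hpos : ∀ ω ω', E ω ω' → 0 < φ ω ω')
    (hrec : ∀ ω ω', E ω ω' → φ ω ω' = 1 / φ ω' ω)
    (hINC : INCc E F φ)
    -- `C` is a connected component: nonempty, pairwise connected and maximal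
    (C : Finset Ω) (hC1 : C.Nonempty)
    (hC2 : ∀ ω ∈ C, ∀ ω' ∈ C, Reach E ω ω')
    (hC3 : ∀ ω ∈ C, ∀ ω', Reach E ω ω' → ω' ∈ C)
    -- `Φ` is the extension of `φ` along paths (in particular `Φ ω ω = 1`)
    (Φ : Ω → Ω → ℝ)
    (hΦ : ∀ (m : ℕ) (ωs : Fin (m + 1) → Ω), IsPath E ωs →
      Φ (ωs 0) (ωs (Fin.last m)) = pathProd φ ωs) :
    ∀ ω ∈ C, ∀ ω₁ ∈ C,
      (∀ ω' ∈ C, Φ ω' ω / (∑ ω'' ∈ C, Φ ω'' ω) = Φ ω' ω₁ / (∑ ω'' ∈ C, Φ ω'' ω₁)) ∧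
      (∀ ω' ∈ C, 0 ≤ Φ ω' ω / (∑ ω'' ∈ C, Φ ω'' ω)) ∧
      ((∑ ω' ∈ C, Φ ω' ω / (∑ ω'' ∈ C, Φ ω'' ω)) = 1) :=
  stmt_3_general E φ hpos C hC1 hC2 Φ hΦ
end

section
/- Let μ, ν_1,…,ν_k be probability distributions on a nonempty finite set Ω. The family {ν_1,…,ν_k} strictly preserves positivity (SPP) with respect to μ if and only if there exist weights q_1,…,q_k with q_i > 0 for every i, Σ q_i = 1, and μ = Σ_{i=1}^k q_i ν_i. -/
/-!
A strictly positive combination `μ = ∑ qᵢ νᵢ` gives SPP at once: `E_μ[u] = ∑ qᵢ E_{νᵢ}[u]` is a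
positive combination of nonnegative numbers. Conversely, since all distributions have mass one,
SPP may be applied to `u` shifted by a constant, so it says that the range of the linear map
`u ↦ (E_{νᵢ}[u] - E_μ[u])ᵢ` meets the nonnegative orthant only in `0`. Separating this subspace
from the standard simplex (Stiemke's theorem) gives a strictly positive `c` orthogonal to it,
i.e. `∑ cᵢ (νᵢ - μ) = 0`, and `q = c / ∑ cᵢ` are the weights.
-/

open Finset

/-- The family `ν` strictly preserves positivity (SPP) w.r.t. `μ`: for every
option `u` with `E_μ[u] = 0` and `E_{ν_i}[u] ≥ 0` for every `i`, it follows that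
`E_{ν_i}[u] = 0` for every `i`. -/
def SPP {Ω : Type} [Fintype Ω] {k : ℕ} (ν : Fin k → Ω → ℝ) (μ : Ω → ℝ) : Prop :=
  ∀ u : Ω → ℝ, (∑ ω, μ ω * u ω) = 0 → (∀ i, 0 ≤ ∑ ω, ν i ω * u ω) →
    ∀ i, (∑ ω, ν i ω * u ω) = 0

open Matrix

theorem Submodule.exists_pos_forall_dotProduct_eq_zero {ι : Type*} [Fintype ι]
    (W : Submodule ℝ (ι → ℝ)) (hW : ∀ w ∈ W, 0 ≤ w → w = 0) :
    ∃ c : ι → ℝ, (∀ i, 0 < c i) ∧ ∀ w ∈ W, c ⬝ᵥ w = 0 := by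
  classical
  have hdisj : Disjoint (stdSimplex ℝ ι) (W : Set (ι → ℝ)) := by
    refine Set.disjoint_left.mpr fun x hx hxW => ?_
    simpa [hW x hxW hx.1] using hx.2
  obtain ⟨f, s, t, hfs, hst, hft⟩ := geometric_hahn_banach_compact_closed (convex_stdSimplex ℝ ι)
    (isCompact_stdSimplex ℝ ι) W.convex W.closed_of_finiteDimensional hdisj
  -- `f` is bounded below on the subspace `W`, hence vanishes on it.
  have hfW : ∀ w ∈ W, f w = 0 := by
    intro w hw
    by_contra hne
    have := hft _ (W.smul_mem (t / f w) hw)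
    rw [map_smul, smul_eq_mul, div_mul_cancel₀ t hne] at this
    exact lt_irrefl t this
  have ht : t < 0 := by simpa using hft 0 W.zero_mem
  refine ⟨fun i => -f (Pi.single i 1), fun i => ?_, fun w hw => ?_⟩
  · linarith [hfs _ (single_mem_stdSimplex ℝ i)]
  · have hf := f.toLinearMap.pi_apply_eq_sum_univ w
    simp only [ContinuousLinearMap.coe_coe, hfW w hw, smul_eq_mul, ← Pi.single_apply] at hf
    simp only [dotProduct, neg_mul, Finset.sum_neg_distrib, neg_eq_zero, mul_comm (f _)]
    simpa only [Pi.single_comm] using hf.symm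

theorem Matrix.exists_pos_vecMul_eq_zero {ι κ : Type*} [Fintype ι] [Fintype κ]
    (M : Matrix ι κ ℝ) (hM : ∀ u, 0 ≤ M *ᵥ u → M *ᵥ u = 0) :
    ∃ c : ι → ℝ, (∀ i, 0 < c i) ∧ c ᵥ* M = 0 := by
  classical
  obtain ⟨c, hc, hcW⟩ := (LinearMap.range M.mulVecLin).exists_pos_forall_dotProduct_eq_zero
    (by rintro _ ⟨u, rfl⟩; exact hM u)
  refine ⟨c, hc, funext fun j => ?_⟩
  have := hcW _ ⟨Pi.single j 1, rfl⟩
  rwa [mulVecLin_apply, mulVec_single_one] at this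

namespace SPP

variable {Ω : Type} [Fintype Ω] {k : ℕ} {ν : Fin k → Ω → ℝ} {μ : Ω → ℝ}

theorem of_eq_sum_mul (q : Fin k → ℝ) (hq : ∀ i, 0 < q i) (hμ : ∀ ω, μ ω = ∑ i, q i * ν i ω) :
    SPP ν μ := by
  intro u hμu hνu i
  have hsum : ∑ j, q j * ∑ ω, ν j ω * u ω = 0 := by
    rw [← hμu]
    simp only [hμ, Finset.mul_sum, Finset.sum_mul, mul_assoc]
    exact Finset.sum_comm
  have hterm := (Finset.sum_eq_zero_iff_of_nonneg fun j _ => mul_nonneg (hq j).le (hνu j)).mp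
    hsum i (Finset.mem_univ i)
  exact (mul_eq_zero.mp hterm).resolve_left (hq i).ne'

theorem eq_of_forall_le (h : SPP ν μ) (hμ : ∑ ω, μ ω = 1) (hν : ∀ i, ∑ ω, ν i ω = 1)
    (u : Ω → ℝ) (hu : ∀ i, ∑ ω, μ ω * u ω ≤ ∑ ω, ν i ω * u ω) (i : Fin k) :
    ∑ ω, ν i ω * u ω = ∑ ω, μ ω * u ω := by
  set m := ∑ ω, μ ω * u ω
  have hshift : ∀ ρ : Ω → ℝ, ∑ ω, ρ ω = 1 → ∑ ω, ρ ω * (u ω - m) = ∑ ω, ρ ω * u ω - m := by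
    intro ρ hρ
    simp only [mul_sub, Finset.sum_sub_distrib, ← Finset.sum_mul, hρ, one_mul]
  have := h (fun ω => u ω - m) (by rw [hshift μ hμ, sub_self])
    (fun j => by rw [hshift _ (hν j), sub_nonneg]; exact hu j) i
  rwa [hshift _ (hν i), sub_eq_zero] at this

theorem exists_pos_sum_mul_sub_eq_zero (h : SPP ν μ) (hμ : ∑ ω, μ ω = 1)
    (hν : ∀ i, ∑ ω, ν i ω = 1) :
    ∃ c : Fin k → ℝ, (∀ i, 0 < c i) ∧ ∀ ω, ∑ i, c i * (ν i ω - μ ω) = 0 := by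
  have hM (u : Ω → ℝ) (i : Fin k) :
      ((of fun i ω => ν i ω - μ ω) *ᵥ u) i = ∑ ω, ν i ω * u ω - ∑ ω, μ ω * u ω := by
    simp only [mulVec, dotProduct, of_apply, sub_mul, Finset.sum_sub_distrib]
  obtain ⟨c, hc, hcM⟩ := exists_pos_vecMul_eq_zero (of fun i ω => ν i ω - μ ω)
    fun u hu => funext fun i => by
      rw [hM, h.eq_of_forall_le hμ hν u (fun j => sub_nonneg.mp (hM u j ▸ hu j)) i, sub_self,
        Pi.zero_apply]
  exact ⟨c, hc, fun ω => congrFun hcM ω⟩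

end SPP

theorem stmt_9_general {Ω : Type} [Fintype Ω] {k : ℕ} (hk : 0 < k)
    (μ : Ω → ℝ) (hμ1 : (∑ ω, μ ω) = 1)
    (ν : Fin k → Ω → ℝ) (hν : ∀ i, (∀ ω, 0 ≤ ν i ω) ∧ ((∑ ω, ν i ω) = 1)) :
    SPP ν μ ↔ ∃ q : Fin k → ℝ, (∀ i, 0 < q i) ∧ ((∑ i, q i) = 1) ∧
      (∀ ω, μ ω = ∑ i, q i * ν i ω) := by
  refine ⟨fun hspp => ?_, fun ⟨q, hq, _, hμq⟩ => SPP.of_eq_sum_mul q hq hμq⟩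
  obtain ⟨c, hc, hcν⟩ := hspp.exists_pos_sum_mul_sub_eq_zero hμ1 fun i => (hν i).2
  have hs : 0 < ∑ i, c i := Finset.sum_pos (fun i _ => hc i) ⟨⟨0, hk⟩, Finset.mem_univ _⟩
  refine ⟨fun i => c i / ∑ j, c j, fun i => div_pos (hc i) hs,
    by rw [← Finset.sum_div, div_self hs.ne'], fun ω => ?_⟩
  have hμc : ∑ i, c i * ν i ω = (∑ i, c i) * μ ω := by
    simpa only [mul_sub, Finset.sum_sub_distrib, ← Finset.sum_mul, sub_eq_zero] using hcν ω
  simp only [div_mul_eq_mul_div, ← Finset.sum_div, hμc, mul_div_cancel_left₀ _ hs.ne']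

/-- `{ν_1,…,ν_k}` strictly preserves positivity w.r.t. `μ` iff `μ`
is a convex combination of `ν_1,…,ν_k` with all weights strictly positive. -/
theorem stmt_9 {Ω : Type} [Fintype Ω] [Nonempty Ω] {k : ℕ} (hk : 0 < k)
    (μ : Ω → ℝ) (hμ0 : ∀ ω, 0 ≤ μ ω) (hμ1 : (∑ ω, μ ω) = 1)
    (ν : Fin k → Ω → ℝ) (hν : ∀ i, (∀ ω, 0 ≤ ν i ω) ∧ ((∑ ω, ν i ω) = 1)) :
    SPP ν μ ↔ ∃ q : Fin k → ℝ, (∀ i, 0 < q i) ∧ ((∑ i, q i) = 1) ∧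
      (∀ ω, μ ω = ∑ i, q i * ν i ω) :=
  stmt_9_general hk μ hμ1 ν hν
end

section
/- Let Ω be a nonempty finite set, F a partition of Ω, μ a strictly positive probability distribution on Ω, and μ_1,…,μ_k probability distributions on Ω such that for each i there exist an F-measurable signaling function τ_i and a signal s_i with Σ_ω μ(ω)τ_i(s_i|ω) > 0 and μ_{τ_i}(·|s_i) = μ_i. Then there exists an F-measurable signaling function τ such that for every signal s generated by τ with positive probability (i.e., Σ_ω μ(ω)τ(s|ω) > 0) the posterior μ_τ(·|s) belongs to the family {μ_1,…,μ_k}, if and only if the family {μ_1,…,μ_k} preserves positivity (PP) with respect to μ. -/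
/-!
Splitting `μ` along the signals of `τ` writes it as a convex combination of the posteriors, so
any option with nonnegative expectation under every `μ_i` has nonnegative expectation under `μ`.
Conversely, by separating hyperplanes PP says exactly that `μ` lies in the convex hull of the
`μ_i`, say `μ = ∑ λ_i μ_i`. Each density `μ_i / μ` is F-measurable because `μ_i` is a posterior of
an F-measurable signal, and sending signal `i` with probability `λ_i μ_i(ω) / μ(ω)` is a signaling
function whose posterior after `i` is `μ_i`.
-/

open Finset

/-- Preserves positivity (PP). -/
def PP {Ω : Type} [Fintype Ω] {k : ℕ} (ν : Fin k → Ω → ℝ) (μ : Ω → ℝ) : Prop :=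
  ∀ u : Ω → ℝ, (∀ i, 0 ≤ ∑ ω, ν i ω * u ω) → 0 ≤ ∑ ω, μ ω * u ω

section Signaling

variable {Ω S : Type*} [Fintype Ω]

theorem sum_mul_eq_sum_sum_signal [Fintype S] (μ u : Ω → ℝ) {τ : Ω → S → ℝ}
    (hτ : ∀ ω, ∑ s, τ ω s = 1) :
    ∑ ω, μ ω * u ω = ∑ s, ∑ ω, μ ω * τ ω s * u ω := by
  rw [sum_comm]
  refine sum_congr rfl fun ω _ => ?_
  rw [← sum_mul, ← mul_sum, hτ ω, mul_one]

theorem sum_mul_signal_eq_zero {μ : Ω → ℝ} {τ : Ω → S → ℝ} {s : S}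
    (hnn : ∀ ω, 0 ≤ μ ω * τ ω s) (hs : ∑ ω, μ ω * τ ω s = 0) (u : Ω → ℝ) :
    ∑ ω, μ ω * τ ω s * u ω = 0 := by
  have hzero := (sum_eq_zero_iff_of_nonneg fun ω _ => hnn ω).1 hs
  exact sum_eq_zero fun ω hω => by rw [hzero ω hω, zero_mul]

theorem sum_mul_signal_eq_of_posterior {μ ν : Ω → ℝ} {τ : Ω → S → ℝ} {s : S}
    (hs : 0 < ∑ ω, μ ω * τ ω s) (hpost : ∀ ω, μ ω * τ ω s / ∑ ω', μ ω' * τ ω' s = ν ω)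
    (u : Ω → ℝ) :
    ∑ ω, μ ω * τ ω s * u ω = (∑ ω, μ ω * τ ω s) * ∑ ω, ν ω * u ω := by
  rw [mul_sum]
  refine sum_congr rfl fun ω _ => ?_
  rw [← hpost ω, ← mul_assoc, mul_div_cancel₀ _ hs.ne']

theorem div_prior_eq_of_posterior {μ ν : Ω → ℝ} {τ : Ω → S → ℝ} {s : S} {ω : Ω} (hμ : μ ω ≠ 0)
    (hpost : ∀ ω, ν ω = μ ω * τ ω s / ∑ ω', μ ω' * τ ω' s) :
    ν ω / μ ω = τ ω s / ∑ ω', μ ω' * τ ω' s := by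
  rw [hpost ω, mul_div_assoc, mul_div_cancel_left₀ _ hμ]

end Signaling

section PreservesPositivity

variable {Ω : Type} [Fintype Ω] {k : ℕ}

theorem PP_of_forall_posterior_mem {S : Type*} [Fintype S] {ν : Fin k → Ω → ℝ} {μ : Ω → ℝ}
    (hμ : ∀ ω, 0 ≤ μ ω) {τ : Ω → S → ℝ} (hτ0 : ∀ ω s, 0 ≤ τ ω s) (hτ1 : ∀ ω, ∑ s, τ ω s = 1)
    (hpost : ∀ s, 0 < ∑ ω, μ ω * τ ω s →
      ∃ i, ∀ ω, μ ω * τ ω s / ∑ ω', μ ω' * τ ω' s = ν i ω) :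
    PP ν μ := by
  intro u hu
  rw [sum_mul_eq_sum_sum_signal μ u hτ1]
  refine sum_nonneg fun s _ => ?_
  have hnn : ∀ ω, 0 ≤ μ ω * τ ω s := fun ω => mul_nonneg (hμ ω) (hτ0 ω s)
  rcases (sum_nonneg fun ω _ => hnn ω).eq_or_lt with hzero | hpos
  · exact (sum_mul_signal_eq_zero hnn hzero.symm u).ge
  · obtain ⟨i, hi⟩ := hpost s hpos
    rw [sum_mul_signal_eq_of_posterior hpos hi]
    exact mul_nonneg hpos.le (hu i)

/-- The option `ω ↦ c - f(e_ω)` realises the separating affine functional `c - f` as an expectation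
on probability vectors. -/
theorem sum_mul_sub_dual_eq [DecidableEq Ω] (f : (Ω → ℝ) →ₗ[ℝ] ℝ) (c : ℝ) {x : Ω → ℝ}
    (hx : ∑ ω, x ω = 1) :
    ∑ ω, x ω * (c - f fun ω' => if ω = ω' then 1 else 0) = c - f x := by
  rw [f.pi_apply_eq_sum_univ x]
  simp only [mul_sub, sum_sub_distrib, ← sum_mul, hx, one_mul, smul_eq_mul]

theorem PP.exists_mem_stdSimplex {ν : Fin k → Ω → ℝ} {μ : Ω → ℝ} (h : PP ν μ)
    (hμ : ∑ ω, μ ω = 1) (hν : ∀ i, ∑ ω, ν i ω = 1) :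
    ∃ l ∈ stdSimplex ℝ (Fin k), μ = ∑ i, l i • ν i := by
  classical
  set T := Fintype.linearCombination ℝ ν
  suffices hμT : μ ∈ T '' stdSimplex ℝ (Fin k) by
    obtain ⟨l, hl, rfl⟩ := hμT
    exact ⟨l, hl, Fintype.linearCombination_apply ℝ ν l⟩
  by_contra hμT
  have hconvex : Convex ℝ (T '' stdSimplex ℝ (Fin k)) := (convex_stdSimplex ℝ _).linear_image T
  have hclosed : IsClosed (T '' stdSimplex ℝ (Fin k)) :=
    ((isCompact_stdSimplex ℝ _).image T.continuous_of_finiteDimensional).isClosed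
  obtain ⟨f, c, hν_lt, hμ_gt⟩ := geometric_hahn_banach_closed_point hconvex hclosed hμT
  have hνT : ∀ i, ν i ∈ T '' stdSimplex ℝ (Fin k) := fun i =>
    ⟨Pi.single i 1, single_mem_stdSimplex ℝ i, by simp [T]⟩
  have hμ_nonneg := h _ fun i => by
    rw [sum_mul_sub_dual_eq f.toLinearMap c (hν i)]
    exact sub_nonneg.2 (hν_lt _ (hνT i)).le
  rw [sum_mul_sub_dual_eq f.toLinearMap c hμ] at hμ_nonneg
  exact (sub_nonneg.1 hμ_nonneg).not_gt hμ_gt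

theorem exists_signaling_of_mem_stdSimplex {F : Ω → Ω → Prop} {μ : Ω → ℝ}
    (hμ : ∀ ω, 0 < μ ω) {ν : Fin k → Ω → ℝ} (hν0 : ∀ i ω, 0 ≤ ν i ω)
    (hν1 : ∀ i, ∑ ω, ν i ω = 1) (hνF : ∀ i ω ω', F ω ω' → ν i ω / μ ω = ν i ω' / μ ω')
    {l : Fin k → ℝ} (hl : l ∈ stdSimplex ℝ (Fin k)) (hμl : μ = ∑ i, l i • ν i) :
    ∃ (S : Type) (_ : Fintype S) (τ : Ω → S → ℝ),
      (∀ ω s, 0 ≤ τ ω s) ∧ (∀ ω, (∑ s, τ ω s) = 1) ∧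
      (∀ ω ω', F ω ω' → ∀ s, τ ω s = τ ω' s) ∧
      (∀ s, 0 < (∑ ω, μ ω * τ ω s) →
        ∃ i, ∀ ω, μ ω * τ ω s / (∑ ω', μ ω' * τ ω' s) = ν i ω) := by
  have hjoint : ∀ i ω, μ ω * (l i * (ν i ω / μ ω)) = l i * ν i ω := fun i ω => by
    rw [mul_left_comm, mul_div_cancel₀ _ (hμ ω).ne']
  have hprob : ∀ i, ∑ ω, μ ω * (l i * (ν i ω / μ ω)) = l i := fun i => by
    simp only [hjoint, ← mul_sum, hν1, mul_one]
  refine ⟨Fin k, inferInstance, fun ω i => l i * (ν i ω / μ ω),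
    fun ω i => mul_nonneg (hl.1 i) (div_nonneg (hν0 i ω) (hμ ω).le), fun ω => ?_,
    fun ω ω' hF i => by simp only [hνF i ω ω' hF], fun i hi => ⟨i, fun ω => ?_⟩⟩
  · have hμω : μ ω = ∑ i, l i * ν i ω := by simpa using congrFun hμl ω
    simp_rw [← mul_div_assoc, ← sum_div, ← hμω, div_self (hμ ω).ne']
  · simp only [hprob] at hi ⊢
    rw [hjoint, mul_div_cancel_left₀ _ hi.ne']

end PreservesPositivity

theorem stmt_13_general {Ω : Type} [Fintype Ω]
    (F : Ω → Ω → Prop)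
    (μ : Ω → ℝ) (hμpos : ∀ ω, 0 < μ ω) (hμsum : (∑ ω, μ ω) = 1)
    {k : ℕ} (ν : Fin k → Ω → ℝ)
    (hν : ∀ i, (∀ ω, 0 ≤ ν i ω) ∧ ((∑ ω, ν i ω) = 1))
    (hgen : ∀ i, ∃ (S : Type) (_ : Fintype S) (τ : Ω → S → ℝ) (s : S),
      (∀ ω s', 0 ≤ τ ω s') ∧ (∀ ω, (∑ s', τ ω s') = 1) ∧
      (∀ ω ω', F ω ω' → ∀ s', τ ω s' = τ ω' s') ∧
      (0 < (∑ ω, μ ω * τ ω s)) ∧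
      (∀ ω, ν i ω = μ ω * τ ω s / (∑ ω', μ ω' * τ ω' s))) :
    (∃ (S : Type) (_ : Fintype S) (τ : Ω → S → ℝ),
      (∀ ω s, 0 ≤ τ ω s) ∧ (∀ ω, (∑ s, τ ω s) = 1) ∧
      (∀ ω ω', F ω ω' → ∀ s, τ ω s = τ ω' s) ∧
      (∀ s, 0 < (∑ ω, μ ω * τ ω s) →
        ∃ i, ∀ ω, μ ω * τ ω s / (∑ ω', μ ω' * τ ω' s) = ν i ω)) ↔
    PP ν μ := by
  constructor
  · rintro ⟨S, _, τ, hτ0, hτ1, -, hpost⟩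
    exact PP_of_forall_posterior_mem (fun ω => (hμpos ω).le) hτ0 hτ1 hpost
  · intro hPP
    have hνF : ∀ i ω ω', F ω ω' → ν i ω / μ ω = ν i ω' / μ ω' := by
      intro i ω ω' hωω'
      obtain ⟨S, _, τ, s, -, -, hτF, -, hpost⟩ := hgen i
      rw [div_prior_eq_of_posterior (hμpos ω).ne' hpost,
        div_prior_eq_of_posterior (hμpos ω').ne' hpost, hτF ω ω' hωω']
    obtain ⟨l, hl, hμl⟩ := hPP.exists_mem_stdSimplex hμsum fun i => (hν i).2
    exact exists_signaling_of_mem_stdSimplex hμpos (fun i => (hν i).1) (fun i => (hν i).2)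
      hνF hl hμl

/-- Theorem 2, part (i): given that each `μ_i` is induced by some
F-measurable signaling function and signal, there exists an F-measurable
signaling function all of whose positive-probability posteriors belong to
`{μ_1,…,μ_k}` iff the family `{μ_1,…,μ_k}` preserves positivity w.r.t. `μ`. -/
theorem stmt_13 {Ω : Type} [Fintype Ω] [Nonempty Ω]
    (F : Ω → Ω → Prop) (hF : Equivalence F)
    (μ : Ω → ℝ) (hμpos : ∀ ω, 0 < μ ω) (hμsum : (∑ ω, μ ω) = 1)
    {k : ℕ} (ν : Fin k → Ω → ℝ)
    (hν : ∀ i, (∀ ω, 0 ≤ ν i ω) ∧ ((∑ ω, ν i ω) = 1))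
    (hgen : ∀ i, ∃ (S : Type) (_ : Fintype S) (τ : Ω → S → ℝ) (s : S),
      (∀ ω s', 0 ≤ τ ω s') ∧ (∀ ω, (∑ s', τ ω s') = 1) ∧
      (∀ ω ω', F ω ω' → ∀ s', τ ω s' = τ ω' s') ∧
      (0 < (∑ ω, μ ω * τ ω s)) ∧
      (∀ ω, ν i ω = μ ω * τ ω s / (∑ ω', μ ω' * τ ω' s))) :
    (∃ (S : Type) (_ : Fintype S) (τ : Ω → S → ℝ),
      (∀ ω s, 0 ≤ τ ω s) ∧ (∀ ω, (∑ s, τ ω s) = 1) ∧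
      (∀ ω ω', F ω ω' → ∀ s, τ ω s = τ ω' s) ∧
      (∀ s, 0 < (∑ ω, μ ω * τ ω s) →
        ∃ i, ∀ ω, μ ω * τ ω s / (∑ ω', μ ω' * τ ω' s) = ν i ω)) ↔
    PP ν μ :=
  stmt_13_general F μ hμpos hμsum ν hν hgen
end

section
/- Let Ω be a nonempty finite set, F a partition of Ω, μ a strictly positive probability distribution on Ω, and μ_1,…,μ_k probability distributions on Ω such that for each i there exist an F-measurable signaling function τ_i and a signal s_i with Σ_ω μ(ω)τ_i(s_i|ω) > 0 and μ_{τ_i}(·|s_i) = μ_i. Then there exists an F-measurable signaling function τ such that the set of posteriors generated by τ with positive probability, {μ_τ(·|s) : Σ_ω μ(ω)τ(s|ω) > 0}, coincides exactly with {μ_1,…,μ_k}, if and only if the family {μ_1,…,μ_k} strictly preserves positivity (SPP) with respect to μ. -/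
open Finset

/-!
A signaling function splits `E_μ[u]` as `∑ₛ P(s) E_{μ_τ(·|s)}[u]`. If the positive-probability
posteriors are exactly the `ν i`, then `E_μ[u] = 0` and `E_{ν i}[u] ≥ 0` for all `i` force every
summand, hence every `E_{ν i}[u]`, to vanish.

Conversely, SPP says that the subspace `{(E_{ν i}[u])ᵢ : E_μ[u] = 0}` of `ℝᵏ` meets the
nonnegative orthant only at `0`. Separating it from the standard simplex yields strictly positive
weights `l` with `∑ᵢ lᵢ νᵢ = μ`, and `τ(i | ω) = lᵢ νᵢ(ω) / μ(ω)` has posterior `νᵢ` at the signal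
`i`. This `τ` is `F`-measurable because `νᵢ / μ`, the likelihood ratio of a posterior of an
`F`-measurable signal, is constant on the cells of `F`.
-/

open Matrix

/-- Stiemke's lemma. -/
theorem exists_pos_dotProduct_eq_zero_of_nonneg_eq_zero {ι : Type*} [Fintype ι]
    (V : Submodule ℝ (ι → ℝ)) (hV : ∀ x ∈ V, 0 ≤ x → x = 0) :
    ∃ y : ι → ℝ, (∀ i, 0 < y i) ∧ ∀ x ∈ V, y ⬝ᵥ x = 0 := by
  classical
  have hdisj : Disjoint (V : Set (ι → ℝ)) (stdSimplex ℝ ι) := by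
    refine Set.disjoint_left.2 fun x hxV hx => ?_
    have := hx.2
    rw [hV x hxV hx.1] at this
    simp at this
  obtain ⟨f, a, b, hfV, hab, hfS⟩ := geometric_hahn_banach_closed_compact V.convex
    (Submodule.closed_of_finiteDimensional V) (convex_stdSimplex ℝ ι)
    (isCompact_stdSimplex ℝ ι) hdisj
  have hf0 : ∀ x ∈ V, f x = 0 := by
    intro x hx
    by_contra hne
    have := hfV ((a / f x) • x) (V.smul_mem _ hx)
    rw [map_smul, smul_eq_mul, div_mul_cancel₀ _ hne] at this
    exact this.false
  have ha : 0 < a := by simpa using hfV 0 V.zero_mem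
  set y := (dotProductEquiv ℝ ι).symm f.toLinearMap
  have hfy : ∀ x, f x = y ⬝ᵥ x := fun x =>
    congrArg (fun g : Module.Dual ℝ (ι → ℝ) => g x)
      ((dotProductEquiv ℝ ι).apply_symm_apply f.toLinearMap).symm
  refine ⟨y, fun i => ?_, fun x hx => hfy x ▸ hf0 x hx⟩
  have := hfS _ (single_mem_stdSimplex ℝ i)
  rw [hfy, dotProduct_single_one] at this
  linarith

theorem SPP.exists_pos_weights {Ω : Type} [Fintype Ω] {k : ℕ} {ν : Fin k → Ω → ℝ}
    {μ : Ω → ℝ} (h : SPP ν μ) (hk : 0 < k) (hμ : ∑ ω, μ ω = 1)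
    (hν : ∀ i, ∑ ω, ν i ω = 1) :
    ∃ l : Fin k → ℝ, (∀ i, 0 < l i) ∧ ∀ ω, ∑ i, l i * ν i ω = μ ω := by
  classical
  set N : Matrix (Fin k) Ω ℝ := Matrix.of ν
  obtain ⟨y, hy_pos, hy⟩ := exists_pos_dotProduct_eq_zero_of_nonneg_eq_zero
    ((LinearMap.ker (dotProductBilin ℝ ℝ μ)).map N.mulVecLin) <| by
      rintro _ ⟨u, hu, rfl⟩ hnonneg
      exact funext (h u hu hnonneg)
  set c := ∑ i, y i
  have hc : 0 < c :=
    haveI : Nonempty (Fin k) := ⟨⟨0, hk⟩⟩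
    Finset.sum_pos (fun i _ => hy_pos i) Finset.univ_nonempty
  -- `u - (μ ⬝ᵥ u) • 1` is centred under `μ`, so `y ᵥ* N` is proportional to `μ`
  have hprop : ∀ u, (y ᵥ* N) ⬝ᵥ u = c * (μ ⬝ᵥ u) := by
    intro u
    have hcentred : μ ⬝ᵥ (u - (μ ⬝ᵥ u) • 1) = 0 := by
      rw [dotProduct_sub, dotProduct_smul, dotProduct_one, hμ, smul_eq_mul, mul_one, sub_self]
    have hyN1 : (y ᵥ* N) ⬝ᵥ 1 = c := by
      rw [← dotProduct_mulVec]
      have hN1 : N *ᵥ 1 = 1 := funext fun i => by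
        simp only [mulVec, dotProduct_one, N, of_apply, hν, Pi.one_apply]
      rw [hN1, dotProduct_one]
    have := hy _ ⟨_, hcentred, rfl⟩
    rw [mulVecLin_apply, dotProduct_mulVec, dotProduct_sub, dotProduct_smul, hyN1, smul_eq_mul,
      sub_eq_zero] at this
    linarith
  refine ⟨fun i => y i / c, fun i => div_pos (hy_pos i) hc, fun ω => ?_⟩
  have := hprop (Pi.single ω 1)
  rw [dotProduct_single_one, dotProduct_single_one] at this
  simp only [div_mul_eq_mul_div, ← Finset.sum_div, div_eq_iff hc.ne']
  rw [mul_comm]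
  exact this

section Signals

variable {Ω S : Type*} [Fintype Ω] (μ : Ω → ℝ) (τ : Ω → S → ℝ)

def signalProb (s : S) : ℝ := ∑ ω, μ ω * τ ω s

noncomputable def posterior (s : S) (ω : Ω) : ℝ := μ ω * τ ω s / signalProb μ τ s

variable {μ τ}

theorem sum_mul_eq_signalProb_mul_posterior {s : S} (hs : signalProb μ τ s ≠ 0) (u : Ω → ℝ) :
    ∑ ω, μ ω * τ ω s * u ω = signalProb μ τ s * ∑ ω, posterior μ τ s ω * u ω := by
  rw [Finset.mul_sum]
  refine Finset.sum_congr rfl fun ω _ => ?_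
  rw [posterior, ← mul_assoc, mul_div_cancel₀ _ hs]

theorem sum_mul_eq_zero_of_signalProb_eq_zero (hμ : ∀ ω, 0 ≤ μ ω) (hτ : ∀ ω s, 0 ≤ τ ω s)
    {s : S} (hs : signalProb μ τ s = 0) (u : Ω → ℝ) : ∑ ω, μ ω * τ ω s * u ω = 0 := by
  have hterm := (Finset.sum_eq_zero_iff_of_nonneg fun ω _ => mul_nonneg (hμ ω) (hτ ω s)).1 hs
  exact Finset.sum_eq_zero fun ω hω => by rw [hterm ω hω, zero_mul]

theorem sum_sum_mul_eq_of_sum_eq_one [Fintype S] (hτ : ∀ ω, ∑ s, τ ω s = 1) (u : Ω → ℝ) :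
    ∑ s, ∑ ω, μ ω * τ ω s * u ω = ∑ ω, μ ω * u ω := by
  rw [Finset.sum_comm]
  refine Finset.sum_congr rfl fun ω _ => ?_
  rw [← Finset.sum_mul, ← Finset.mul_sum, hτ ω, mul_one]

theorem posterior_mul_eq_of_eq {s : S} {ω ω' : Ω} (h : τ ω s = τ ω' s) :
    posterior μ τ s ω * μ ω' = posterior μ τ s ω' * μ ω := by
  simp only [posterior, h]
  ring

end Signals

theorem SPP_of_posteriors {Ω : Type} {S : Type*} [Fintype Ω] [Fintype S] {k : ℕ} {ν : Fin k → Ω → ℝ}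
    {μ : Ω → ℝ} (hμ : ∀ ω, 0 ≤ μ ω) {τ : Ω → S → ℝ} (hτ_nonneg : ∀ ω s, 0 ≤ τ ω s)
    (hτ_sum : ∀ ω, ∑ s, τ ω s = 1)
    (hsupp : ∀ s, 0 < signalProb μ τ s → ∃ i, ∀ ω, posterior μ τ s ω = ν i ω)
    (hsurj : ∀ i, ∃ s, 0 < signalProb μ τ s ∧ ∀ ω, posterior μ τ s ω = ν i ω) :
    SPP ν μ := by
  intro u hu hνu i
  have hsignal_nonneg : ∀ s, 0 ≤ ∑ ω, μ ω * τ ω s * u ω := by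
    intro s
    rcases (Finset.sum_nonneg fun ω _ => mul_nonneg (hμ ω) (hτ_nonneg ω s)).lt_or_eq with hs | hs
    · obtain ⟨j, hj⟩ := hsupp s hs
      rw [sum_mul_eq_signalProb_mul_posterior hs.ne', funext hj]
      exact mul_nonneg hs.le (hνu j)
    · exact (sum_mul_eq_zero_of_signalProb_eq_zero hμ hτ_nonneg hs.symm u).ge
  have hsignal_zero := (Finset.sum_eq_zero_iff_of_nonneg fun s _ => hsignal_nonneg s).1
    ((sum_sum_mul_eq_of_sum_eq_one hτ_sum u).trans hu)
  obtain ⟨s, hs, hpost⟩ := hsurj i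
  have := hsignal_zero s (Finset.mem_univ s)
  rw [sum_mul_eq_signalProb_mul_posterior hs.ne', funext hpost] at this
  exact (mul_eq_zero.1 this).resolve_left hs.ne'

section WeightedSignal

variable {Ω : Type*} {k : ℕ} (μ : Ω → ℝ) (ν : Fin k → Ω → ℝ) (l : Fin k → ℝ)

noncomputable def weightedSignal (ω : Ω) (i : Fin k) : ℝ := l i * ν i ω / μ ω

variable {μ ν l}

theorem sum_weightedSignal {ω : Ω} (hμ : μ ω ≠ 0) (hl : ∑ i, l i * ν i ω = μ ω) :
    ∑ i, weightedSignal μ ν l ω i = 1 := by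
  simp only [weightedSignal, ← Finset.sum_div, hl, div_self hμ]

theorem signalProb_weightedSignal [Fintype Ω] (hμ : ∀ ω, μ ω ≠ 0) {i : Fin k}
    (hν : ∑ ω, ν i ω = 1) : signalProb μ (weightedSignal μ ν l) i = l i := by
  simp only [signalProb, weightedSignal, mul_div_cancel₀ _ (hμ _), ← Finset.mul_sum, hν, mul_one]

theorem posterior_weightedSignal [Fintype Ω] (hμ : ∀ ω, μ ω ≠ 0) {i : Fin k}
    (hν : ∑ ω, ν i ω = 1) (hl : l i ≠ 0) (ω : Ω) :
    posterior μ (weightedSignal μ ν l) i ω = ν i ω := by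
  rw [posterior, signalProb_weightedSignal hμ hν, weightedSignal, mul_div_cancel₀ _ (hμ ω),
    mul_div_cancel_left₀ _ hl]

theorem weightedSignal_eq_of_mul_eq {ω ω' : Ω} (hμ : μ ω ≠ 0) (hμ' : μ ω' ≠ 0) {i : Fin k}
    (h : ν i ω * μ ω' = ν i ω' * μ ω) :
    weightedSignal μ ν l ω i = weightedSignal μ ν l ω' i := by
  rw [weightedSignal, weightedSignal, div_eq_div_iff hμ hμ', mul_assoc, mul_assoc, h]

end WeightedSignal

theorem stmt_14_general {Ω : Type} [Fintype Ω]
    (F : Ω → Ω → Prop)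
    (μ : Ω → ℝ) (hμpos : ∀ ω, 0 < μ ω) (hμsum : (∑ ω, μ ω) = 1)
    {k : ℕ} (hk : 0 < k) (ν : Fin k → Ω → ℝ)
    (hν : ∀ i, (∀ ω, 0 ≤ ν i ω) ∧ ((∑ ω, ν i ω) = 1))
    (hgen : ∀ i, ∃ (S : Type) (_ : Fintype S) (τ : Ω → S → ℝ) (s : S),
      (∀ ω s', 0 ≤ τ ω s') ∧ (∀ ω, (∑ s', τ ω s') = 1) ∧
      (∀ ω ω', F ω ω' → ∀ s', τ ω s' = τ ω' s') ∧
      (0 < (∑ ω, μ ω * τ ω s)) ∧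
      (∀ ω, ν i ω = μ ω * τ ω s / (∑ ω', μ ω' * τ ω' s))) :
    (∃ (S : Type) (_ : Fintype S) (τ : Ω → S → ℝ),
      (∀ ω s, 0 ≤ τ ω s) ∧ (∀ ω, (∑ s, τ ω s) = 1) ∧
      (∀ ω ω', F ω ω' → ∀ s, τ ω s = τ ω' s) ∧
      (∀ s, 0 < (∑ ω, μ ω * τ ω s) →
        ∃ i, ∀ ω, μ ω * τ ω s / (∑ ω', μ ω' * τ ω' s) = ν i ω) ∧
      (∀ i, ∃ s, 0 < (∑ ω, μ ω * τ ω s) ∧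
        ∀ ω, μ ω * τ ω s / (∑ ω', μ ω' * τ ω' s) = ν i ω)) ↔
    SPP ν μ := by
  have hμ : ∀ ω, μ ω ≠ 0 := fun ω => (hμpos ω).ne'
  constructor
  · rintro ⟨S, _, τ, hτ_nonneg, hτ_sum, -, hsupp, hsurj⟩
    exact SPP_of_posteriors (fun ω => (hμpos ω).le) hτ_nonneg hτ_sum hsupp hsurj
  · intro hspp
    obtain ⟨l, hl_pos, hl⟩ := hspp.exists_pos_weights hk hμsum fun i => (hν i).2
    have hratio : ∀ i ω ω', F ω ω' → ν i ω * μ ω' = ν i ω' * μ ω := by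
      intro i ω ω' hF
      obtain ⟨S, _, τ, s, -, -, hτF, -, hpost⟩ := hgen i
      rw [hpost ω, hpost ω']
      exact posterior_mul_eq_of_eq (hτF ω ω' hF s)
    have hpost : ∀ i ω, posterior μ (weightedSignal μ ν l) i ω = ν i ω := fun i =>
      posterior_weightedSignal hμ (hν i).2 (hl_pos i).ne'
    have hprob : ∀ i, 0 < signalProb μ (weightedSignal μ ν l) i := fun i => by
      rw [signalProb_weightedSignal hμ (hν i).2]
      exact hl_pos i
    refine ⟨Fin k, inferInstance, weightedSignal μ ν l, fun ω i => ?_,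
      fun ω => sum_weightedSignal (hμ ω) (hl ω),
      fun ω ω' hF i => weightedSignal_eq_of_mul_eq (hμ ω) (hμ ω') (hratio i ω ω' hF),
      fun i _ => ⟨i, hpost i⟩, fun i => ⟨i, hprob i, hpost i⟩⟩
    exact div_nonneg (mul_nonneg (hl_pos i).le ((hν i).1 ω)) (hμpos ω).le

/-- Theorem 2, part (ii): given that each `μ_i` is induced by some
F-measurable signaling function and signal, there exists an F-measurable
signaling function whose set of positive-probability posteriors coincides
exactly with `{μ_1,…,μ_k}` iff the family `{μ_1,…,μ_k}` strictly preserves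
positivity w.r.t. `μ`. -/
theorem stmt_14 {Ω : Type} [Fintype Ω] [Nonempty Ω]
    (F : Ω → Ω → Prop) (hF : Equivalence F)
    (μ : Ω → ℝ) (hμpos : ∀ ω, 0 < μ ω) (hμsum : (∑ ω, μ ω) = 1)
    {k : ℕ} (hk : 0 < k) (ν : Fin k → Ω → ℝ)
    (hν : ∀ i, (∀ ω, 0 ≤ ν i ω) ∧ ((∑ ω, ν i ω) = 1))
    (hgen : ∀ i, ∃ (S : Type) (_ : Fintype S) (τ : Ω → S → ℝ) (s : S),
      (∀ ω s', 0 ≤ τ ω s') ∧ (∀ ω, (∑ s', τ ω s') = 1) ∧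
      (∀ ω ω', F ω ω' → ∀ s', τ ω s' = τ ω' s') ∧
      (0 < (∑ ω, μ ω * τ ω s)) ∧
      (∀ ω, ν i ω = μ ω * τ ω s / (∑ ω', μ ω' * τ ω' s))) :
    (∃ (S : Type) (_ : Fintype S) (τ : Ω → S → ℝ),
      (∀ ω s, 0 ≤ τ ω s) ∧ (∀ ω, (∑ s, τ ω s) = 1) ∧
      (∀ ω ω', F ω ω' → ∀ s, τ ω s = τ ω' s) ∧
      (∀ s, 0 < (∑ ω, μ ω * τ ω s) →
        ∃ i, ∀ ω, μ ω * τ ω s / (∑ ω', μ ω' * τ ω' s) = ν i ω) ∧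
      (∀ i, ∃ s, 0 < (∑ ω, μ ω * τ ω s) ∧
        ∀ ω, μ ω * τ ω s / (∑ ω', μ ω' * τ ω' s) = ν i ω)) ↔
    SPP ν μ :=
  stmt_14_general F μ hμpos hμsum hk ν hν hgen
end

section
/- Fix a strictly positive common prior μ and a joint belief JB with associated posterior likelihood function φ_JB defined on the edge set of the graph of information. If φ_JB satisfies the internal and external consistency conditions N-[INC] and N-[EXC] with respect to the full graph G_N (built from the partitions of all players in N), then for every nonempty subgroup I ⊆ N, φ_JB restricted to the edge set E_I also satisfies I-[INC] and I-[EXC] with respect to the subgraph G_I (built from the partitions of the players in I only). -/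
open Finset

lemma path_concat {Ω : Type} (E : Ω → Ω → Prop) (φ : Ω → Ω → ℝ) {m k : ℕ}
    (s : Fin (m + 1) → Ω) (t : Fin (k + 1) → Ω) (hs : IsPath E s) (ht : IsPath E t)
    (hst : s (Fin.last m) = t 0) :
    ∃ u : Fin (m + k + 1) → Ω, IsPath E u ∧ u 0 = s 0 ∧
      u (Fin.last (m + k)) = t (Fin.last k) ∧
      pathProd φ u = pathProd φ s * pathProd φ t := by
  set u : Fin (m + k + 1) → Ω := fun i =>
    if h : i.val < m + 1 then s ⟨i.val, h⟩ else t ⟨i.val - m, by omega⟩ with hu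
  have hu_s : ∀ (j : Fin (m + k + 1)) (h1 : j.val < m + 1), u j = s ⟨j.val, h1⟩ := by
    intro j h1; simp only [hu, dif_pos h1]
  have hu_t : ∀ (j : Fin (m + k + 1)) (h1 : m ≤ j.val), u j = t ⟨j.val - m, by omega⟩ := by
    intro j h1
    by_cases h : j.val < m + 1
    · have hjm : j.val = m := by omega
      simp only [hu, dif_pos h]
      have h2 : s ⟨j.val, h⟩ = s (Fin.last m) := by
        congr 1; apply Fin.ext; simpa using hjm
      rw [h2, hst]; congr 1; apply Fin.ext; simp [hjm]
    · simp only [hu, dif_neg h]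
  refine ⟨u, ?_, ?_, ?_, ?_⟩
  · intro i
    rcases lt_or_ge i.val m with h | h
    · rw [hu_s i.castSucc (by simp; omega), hu_s i.succ (by simp [Fin.val_succ]; omega)]
      have := hs ⟨i.val, h⟩
      convert this using 2 <;> apply Fin.ext <;> simp
    · rw [hu_t i.castSucc (by simp; omega), hu_t i.succ (by simp [Fin.val_succ]; omega)]
      have hlt : i.val - m < k := by have := i.isLt; omega
      have := ht ⟨i.val - m, hlt⟩
      convert this using 2 <;> apply Fin.ext <;> simp <;> try omega
  · rw [hu_s 0 (by simp)]; congr 1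
  · rw [hu_t (Fin.last (m + k)) (by simp)]
    congr 1
    apply Fin.ext
    simp
  · unfold pathProd
    rw [Fin.prod_univ_add (fun i : Fin (m + k) => φ (u i.castSucc) (u i.succ))]
    congr 1
    · apply Finset.prod_congr rfl; intro i _
      rw [hu_s (Fin.castAdd k i).castSucc (by simp),
          hu_s (Fin.castAdd k i).succ (by simp [Fin.val_succ]; try omega)]
      congr 2 <;> apply Fin.ext <;> simp
    · apply Finset.prod_congr rfl; intro i _
      rw [hu_t (Fin.natAdd m i).castSucc (by simp),
          hu_t (Fin.natAdd m i).succ (by simp [Fin.val_succ]; omega)]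
      congr 2 <;> apply Fin.ext <;> simp <;> try omega

lemma path_rev {Ω : Type} (E : Ω → Ω → Prop) (hsym : ∀ x y, E x y → E y x) {m : ℕ}
    (s : Fin (m + 1) → Ω) (hs : IsPath E s) : IsPath E (fun i => s i.rev) := by
  intro i
  simp only [Fin.rev_castSucc, Fin.rev_succ]
  exact hsym _ _ (hs i.rev)

lemma reach_trans {Ω : Type} {E : Ω → Ω → Prop} {x y z : Ω}
    (h1 : Reach E x y) (h2 : Reach E y z) : Reach E x z := by
  obtain ⟨m1, p1, hp1, h10, h1l⟩ := h1
  obtain ⟨m2, p2, hp2, h20, h2l⟩ := h2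
  obtain ⟨u, hu, hu0, hul, -⟩ :=
    path_concat E (fun _ _ => (0:ℝ)) p1 p2 hp1 hp2 (h1l.trans h20.symm)
  exact ⟨m1 + m2, u, hu, hu0.trans h10, hul.trans h2l⟩

open Classical in
noncomputable def Phi {Ω : Type} (E : Ω → Ω → Prop) (φ : Ω → Ω → ℝ) (x y : Ω) : ℝ :=
  if h : Reach E x y then pathProd φ h.choose_spec.choose else 1

lemma pathProd_eq_phi {Ω : Type} {E F : Ω → Ω → Prop} {φ : Ω → Ω → ℝ}
    (hsym : ∀ x y, E x y → E y x) (hFrefl : ∀ x, F x x) (hINC : INCc E F φ)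
    {m : ℕ} {q : Fin (m + 1) → Ω} {x y : Ω}
    (hq : IsPath E q) (h0 : q 0 = x) (hl : q (Fin.last m) = y) :
    pathProd φ q = Phi E φ x y := by
  have hR : Reach E x y := ⟨m, q, hq, h0, hl⟩
  rw [Phi]
  rw [dif_pos hR]
  obtain ⟨hp, hp0, hpl⟩ := hR.choose_spec.choose_spec
  set k := hR.choose
  set p := hR.choose_spec.choose
  set r : Fin (k + 1) → Ω := fun i => p i.rev with hrdef
  have hrpath : IsPath E r := path_rev E hsym p hp
  have hr0 : r 0 = y := by rw [hrdef]; simp only [Fin.rev_zero]; exact hpl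
  have hrl : r (Fin.last k) = x := by rw [hrdef]; simp only [Fin.rev_last]; exact hp0
  obtain ⟨u, hu, hu0, hul, hup⟩ := path_concat E φ q r hq hrpath (by rw [hl, hr0])
  have h1 : pathProd φ q * pathProd φ r = 1 := by
    rw [← hup]
    exact hINC _ u hu (by rw [hu0, hul, h0, hrl]; exact hFrefl x)
  obtain ⟨v, hv, hv0, hvl, hvp⟩ := path_concat E φ p r hp hrpath (by rw [hpl, hr0])
  have h2 : pathProd φ p * pathProd φ r = 1 := by
    rw [← hvp]
    exact hINC _ v hv (by rw [hv0, hvl, hp0, hrl]; exact hFrefl x)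
  have hr0' : pathProd φ r ≠ 0 := by
    intro h; rw [h, mul_zero] at h1; exact one_ne_zero h1.symm
  exact mul_right_cancel₀ hr0' (h1.trans h2.symm)

lemma phi_mul {Ω : Type} {E F : Ω → Ω → Prop} {φ : Ω → Ω → ℝ}
    (hsym : ∀ x y, E x y → E y x) (hFrefl : ∀ x, F x x) (hINC : INCc E F φ)
    {x y z : Ω} (hxy : Reach E x y) (hyz : Reach E y z) :
    Phi E φ x z = Phi E φ x y * Phi E φ y z := by
  obtain ⟨m1, p1, h1, h10, h1l⟩ := hxy
  obtain ⟨m2, p2, h2, h20, h2l⟩ := hyz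
  obtain ⟨u, hu, hu0, hul, hup⟩ := path_concat E φ p1 p2 h1 h2 (h1l.trans h20.symm)
  rw [← pathProd_eq_phi hsym hFrefl hINC hu (hu0.trans h10) (hul.trans h2l), hup,
    pathProd_eq_phi hsym hFrefl hINC h1 h10 h1l,
    pathProd_eq_phi hsym hFrefl hINC h2 h20 h2l]

lemma phi_F_one {Ω : Type} {E F : Ω → Ω → Prop} {φ : Ω → Ω → ℝ}
    (hsym : ∀ x y, E x y → E y x) (hFrefl : ∀ x, F x x) (hINC : INCc E F φ)
    {x y : Ω} (h : Reach E x y) (hxy : F x y) : Phi E φ x y = 1 := by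
  obtain ⟨m, p, hp, h0, hl⟩ := h
  rw [← pathProd_eq_phi hsym hFrefl hINC hp h0 hl]
  exact hINC m p hp (by rw [h0, hl]; exact hxy)

lemma phi_refl {Ω : Type} {E F : Ω → Ω → Prop} {φ : Ω → Ω → ℝ}
    (hsym : ∀ x y, E x y → E y x) (hFrefl : ∀ x, F x x) (hINC : INCc E F φ)
    (x : Ω) : Phi E φ x x = 1 := by
  have hq : IsPath E (fun _ : Fin 1 => x) := fun i => i.elim0
  rw [← pathProd_eq_phi (q := fun _ : Fin 1 => x) hsym hFrefl hINC hq rfl rfl]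
  simp [pathProd]

lemma superEXC {Ω : Type} (E F : Ω → Ω → Prop) (φ : Ω → Ω → ℝ)
    (hsym : ∀ x y, E x y → E y x) (hFrefl : ∀ x, F x x)
    (hINC : INCc E F φ) (hEXC : EXCc E F φ) :
    ∀ (m : ℕ) (a b : Fin (m + 1) → Ω), (∀ i, Reach E (a i) (b i)) →
      (∀ i, F (b i) (a (i + 1))) → (∏ i, Phi E φ (a i) (b i)) = 1 := by
  intro m
  induction m with
  | zero =>
    intro a b hr hFc
    have hF0 : F (b 0) (a 0) := by
      have := hFc 0
      rwa [show ((0 : Fin 1) + 1) = 0 from rfl] at this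
    rw [Fin.prod_univ_one]
    by_cases h : Reach E (b 0) (a 0)
    · calc Phi E φ (a 0) (b 0) = Phi E φ (a 0) (b 0) * Phi E φ (b 0) (a 0) := by
            rw [phi_F_one hsym hFrefl hINC h hF0, mul_one]
        _ = Phi E φ (a 0) (a 0) := (phi_mul hsym hFrefl hINC (hr 0) h).symm
        _ = 1 := phi_refl hsym hFrefl hINC _
    · have hnr : ∀ i : Fin 1, ¬ Reach E (b i) (a (i + 1)) := by
        intro i
        have : i = 0 := Subsingleton.elim i 0
        rw [this]
        exact h
      have key := hEXC 0 a b hr hnr hFc (fun i => (hr i).choose)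
        (fun i => (hr i).choose_spec.choose)
        (fun i => (hr i).choose_spec.choose_spec.1)
        (fun i => (hr i).choose_spec.choose_spec.2.1)
        (fun i => (hr i).choose_spec.choose_spec.2.2)
      rw [Fin.prod_univ_one] at key
      rw [← key]
      exact (pathProd_eq_phi hsym hFrefl hINC (hr 0).choose_spec.choose_spec.1
        (hr 0).choose_spec.choose_spec.2.1 (hr 0).choose_spec.choose_spec.2.2).symm
  | succ m ih =>
    intro a b hr hFc
    by_cases hall : ∀ i, ¬ Reach E (b i) (a (i + 1))
    · have key := hEXC (m + 1) a b hr hall hFc (fun i => (hr i).choose)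
        (fun i => (hr i).choose_spec.choose)
        (fun i => (hr i).choose_spec.choose_spec.1)
        (fun i => (hr i).choose_spec.choose_spec.2.1)
        (fun i => (hr i).choose_spec.choose_spec.2.2)
      rw [← key]
      exact Finset.prod_congr rfl fun i _ =>
        (pathProd_eq_phi hsym hFrefl hINC (hr i).choose_spec.choose_spec.1
          (hr i).choose_spec.choose_spec.2.1 (hr i).choose_spec.choose_spec.2.2).symm
    · push_neg at hall
      obtain ⟨i0, hi0⟩ := hall
      -- rotate so that the connected pair is at position (0, 1)
      set A : Fin (m + 2) → Ω := fun j => a (j + i0) with hA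
      set B : Fin (m + 2) → Ω := fun j => b (j + i0) with hB
      have hrA : ∀ j, Reach E (A j) (B j) := fun j => hr _
      have hFA : ∀ j, F (B j) (A (j + 1)) := by
        intro j
        have h := hFc (j + i0)
        rwa [show j + i0 + 1 = j + 1 + i0 from add_right_comm j i0 1] at h
      have h01 : Reach E (B 0) (A 1) := by
        have : (0 : Fin (m + 2)) + i0 = i0 := zero_add i0
        have e1 : (1 : Fin (m + 2)) + i0 = i0 + 1 := add_comm 1 i0
        rw [hB, hA]
        simp only [this, e1]
        exact hi0
      suffices hsuff : (∏ j, Phi E φ (A j) (B j)) = 1 by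
        exact (Fintype.prod_equiv (Equiv.addRight i0) (fun j => Phi E φ (A j) (B j))
          (fun i => Phi E φ (a i) (b i)) (fun x => rfl)).symm.trans hsuff
      -- merge blocks 0 and 1 of the rotated family
      have hrB01 : Reach E (B 0) (B 1) := reach_trans h01 (hrA 1)
      set A2 : Fin (m + 1) → Ω := Fin.cases (A 0) (fun j : Fin m => A j.succ.succ) with hA2
      set B2 : Fin (m + 1) → Ω := fun j => B j.succ with hB2
      have hr2 : ∀ j, Reach E (A2 j) (B2 j) := by
        intro j
        induction j using Fin.cases with
        | zero =>
          simp only [hA2, hB2, Fin.cases_zero, Fin.succ_zero_eq_one]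
          exact reach_trans (hrA 0) hrB01
        | succ j' =>
          simp only [hA2, hB2, Fin.cases_succ]
          exact hrA _
      have hF2 : ∀ j, F (B2 j) (A2 (j + 1)) := by
        intro j
        induction j using Fin.lastCases with
        | last =>
          rw [Fin.last_add_one]
          simp only [hA2, hB2, Fin.cases_zero, Fin.succ_last]
          have h := hFA (Fin.last (m + 1))
          rwa [Fin.last_add_one] at h
        | cast j' =>
          rw [Fin.coeSucc_eq_succ]
          simp only [hA2, hB2, Fin.cases_succ]
          have e2 : j'.castSucc.succ + 1 = j'.succ.succ := by
            apply Fin.ext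
            rw [Fin.val_add_one_of_lt (by simp [Fin.lt_iff_val_lt_val])]
            simp
          have h := hFA j'.castSucc.succ
          rwa [e2] at h
      have hIH := ih A2 B2 hr2 hF2
      rw [Fin.prod_univ_succ] at hIH
      simp only [hA2, hB2, Fin.cases_zero, Fin.cases_succ, Fin.succ_zero_eq_one] at hIH
      have hPB0A1 : Phi E φ (B 0) (A 1) = 1 := by
        apply phi_F_one hsym hFrefl hINC h01
        have h := hFA 0
        rwa [zero_add] at h
      have hsplit : Phi E φ (A 0) (B 1)
          = Phi E φ (A 0) (B 0) * Phi E φ (A 1) (B 1) := by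
        rw [phi_mul hsym hFrefl hINC (hrA 0) hrB01,
            phi_mul hsym hFrefl hINC h01 (hrA 1), hPB0A1, one_mul]
      rw [Fin.prod_univ_succ (fun i : Fin (m + 2) => Phi E φ (A i) (B i)),
          Fin.prod_univ_succ (fun i : Fin (m + 1) => Phi E φ (A i.succ) (B i.succ))]
      rw [Fin.succ_zero_eq_one, ← mul_assoc, ← hsplit]
      exact hIH

/-- Proposition: if `φ_JB` satisfies `N`-[INC] and `N`-[EXC] in the
graph built from the partitions of all players, then for every nonempty subgroup
`I ⊆ N` it satisfies `I`-[INC] and `I`-[EXC] in the subgraph built from the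
partitions of the players in `I`. -/
theorem stmt_15 {Ω : Type} [Fintype Ω] [Nonempty Ω] {n : ℕ} (hn : 2 ≤ n)
    (P : Fin n → Ω → Ω → Prop) (hP : ∀ i, Equivalence (P i))
    (F : Ω → Ω → Prop) (hF : Equivalence F)
    (μ : Ω → ℝ) (hμpos : ∀ ω, 0 < μ ω) (hμsum : (∑ ω, μ ω) = 1)
    (JB : Ω → Fin n → Ω → ℝ)
    (hJBdist : ∀ ω i, (∀ ω', 0 ≤ JB ω i ω') ∧
      (((∑ ω', JB ω i ω') = 1) ∨ (∀ ω', JB ω i ω' = 0)))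
    (hJBpos : ∀ ω i, 0 < JB ω i ω)
    (hJB2 : ∀ (i j : Fin n) (ω ω' : Ω), P i ω ω' → P j ω ω' →
      JB ω i ω / JB ω' i ω' = JB ω j ω / JB ω' j ω')
    -- `φ` is the posterior likelihood function associated with JB and μ
    (φ : Ω → Ω → ℝ)
    (hφ : ∀ (i : Fin n) (ω ω' : Ω), P i ω ω' →
      φ ω ω' = (JB ω i ω / JB ω' i ω') * (μ ω' / μ ω))
    (hINC : INCc (fun ω ω' => ∃ i, P i ω ω') F φ)
    (hEXC : EXCc (fun ω ω' => ∃ i, P i ω ω') F φ) :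
    ∀ I : Finset (Fin n), I.Nonempty →
      INCc (fun ω ω' => ∃ i ∈ I, P i ω ω') F φ ∧
      EXCc (fun ω ω' => ∃ i ∈ I, P i ω ω') F φ := by
  intro I hI
  set E : Ω → Ω → Prop := fun ω ω' => ∃ i, P i ω ω' with hE
  have hsym : ∀ x y, E x y → E y x := fun x y h => h.imp fun i hi => (hP i).symm hi
  have hFrefl : ∀ x, F x x := fun x => hF.refl x
  constructor
  · intro m ωs hpath hfc
    exact hINC m ωs (fun j => (hpath j).imp fun i hi => hi.2) hfc
  · intro m a b hr hnr hFc ms p hp hp0 hpl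
    have hpN : ∀ i, IsPath E (p i) := fun i j => (hp i j).imp fun i' hi' => hi'.2
    have hrN : ∀ i, Reach E (a i) (b i) := fun i => ⟨ms i, p i, hpN i, hp0 i, hpl i⟩
    have hkey := superEXC E F φ hsym hFrefl hINC hEXC m a b hrN hFc
    calc (∏ i, pathProd φ (p i)) = ∏ i, Phi E φ (a i) (b i) :=
          Finset.prod_congr rfl fun i _ =>
            pathProd_eq_phi hsym hFrefl hINC (hpN i) (hp0 i) (hpl i)
      _ = 1 := hkey
end

section
/- Let Γ = (N, (A_i)_{i∈N}, (u_i)_{i∈N}) be a finite strategic game. Then Γ is a potential game if and only if the function ρ_Γ satisfies additive internal consistency [INC-ADD] on the graph Graph(Γ). -/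
open Finset

/-- Corollary 2: a finite strategic game `Γ` is a potential game
iff `ρ_Γ` satisfies additive internal consistency [INC-ADD] on `Graph(Γ)`, whose
vertices are action profiles and whose edges are unilateral deviations. -/
theorem stmt_17 {ι : Type} [Fintype ι] [Nonempty ι] [DecidableEq ι]
    (A : ι → Type) [∀ i, Fintype (A i)] [∀ i, Nonempty (A i)]
    (u : ι → (∀ i, A i) → ℝ)
    -- `ρ` is the function ρ_Γ on the edges of Graph(Γ)
    (ρ : (∀ i, A i) → (∀ i, A i) → ℝ)
    (hρ : ∀ (a : ∀ i, A i) (i : ι) (a' : A i),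
      ρ a (Function.update a i a') = u i a - u i (Function.update a i a')) :
    -- Γ is a potential game
    (∃ g : (∀ i, A i) → ℝ, ∀ (a : ∀ i, A i) (i : ι) (a' : A i),
      g a - g (Function.update a i a') = u i a - u i (Function.update a i a')) ↔
    -- ρ_Γ satisfies [INC-ADD]: its sum along every basic cycle of Graph(Γ) is 0
    (∀ (m : ℕ) (as : Fin (m + 1) → ∀ i, A i),
      (∀ j : Fin m, ∃ (i : ι) (a' : A i),
        as j.succ = Function.update (as j.castSucc) i a') →
      as (Fin.last m) = as 0 →
      (∑ j : Fin m, ρ (as j.castSucc) (as j.succ)) = 0) := by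
  classical
  constructor
  · rintro ⟨g, hg⟩ m as hedge hlast
    set F : ℕ → ℝ := fun k => g (as ⟨min k m, by omega⟩) with hF
    have key : ∀ j : Fin m, ρ (as j.castSucc) (as j.succ) = F j.val - F (j.val + 1) := by
      intro j
      obtain ⟨i, a', h⟩ := hedge j
      have hj := j.isLt
      have h1 : j.castSucc = (⟨min j.val m, by omega⟩ : Fin (m + 1)) := by
        ext; simp only [Fin.coe_castSucc]; omega
      have h2 : j.succ = (⟨min (j.val + 1) m, by omega⟩ : Fin (m + 1)) := by
        ext; simp only [Fin.val_succ]; omega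
      rw [h, hρ, ← hg _ i a', ← h, h1, h2, hF]
    rw [Finset.sum_congr rfl (fun j _ => key j)]
    rw [show (∑ j : Fin m, (F j.val - F (j.val + 1)))
        = ∑ k ∈ Finset.range m, (F k - F (k + 1)) from
      Fin.sum_univ_eq_sum_range (fun k => F k - F (k + 1)) m]
    rw [Finset.sum_range_sub']
    have h0 : (0 : Fin (m + 1)) = (⟨min 0 m, by omega⟩ : Fin (m + 1)) := by
      ext; simp
    have hm : Fin.last m = (⟨min m m, by omega⟩ : Fin (m + 1)) := by
      ext; simp
    rw [hF]
    simp only [← h0, ← hm, hlast, sub_self]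
  · intro H
    -- antisymmetry of ρ along edges
    have hanti : ∀ (a : ∀ i, A i) (i : ι) (a' : A i),
        ρ (Function.update a i a') a = -(ρ a (Function.update a i a')) := by
      intro a i a'
      have h1 := hρ (Function.update a i a') i (a i)
      rw [Function.update_idem, Function.update_eq_self] at h1
      rw [h1, hρ]; ring
    set n := Fintype.card ι with hn
    set e : ι ≃ Fin n := Fintype.equivFin ι with he
    set base : ∀ i, A i := fun i => Classical.arbitrary (A i) with hbase
    set h : (∀ i, A i) → ℕ → ∀ i, A i :=
      fun c k i => if ((e i : ℕ) < k) then c i else base i with hh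
    have h0 : ∀ c, h c 0 = base := by
      intro c; funext i; simp [hh]
    have hfull : ∀ c, h c n = c := by
      intro c; funext i; simp [hh, (e i).isLt]
    have hstep : ∀ (c : ∀ i, A i) (k : ℕ) (hk : k < n),
        h c (k + 1) = Function.update (h c k) (e.symm ⟨k, hk⟩) (c (e.symm ⟨k, hk⟩)) := by
      intro c k hk
      funext i
      rcases eq_or_ne i (e.symm ⟨k, hk⟩) with rfl | hne
      · rw [Function.update_self]
        simp [hh]
      · rw [Function.update_of_ne hne]
        have : (e i : ℕ) ≠ k := by
          intro hc
          apply hne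
          have : e i = ⟨k, hk⟩ := Fin.ext hc
          rw [← this, Equiv.symm_apply_apply]
        simp only [hh]
        by_cases hlt : (e i : ℕ) < k
        · rw [if_pos hlt, if_pos (by omega)]
        · rw [if_neg hlt, if_neg (by omega)]
    refine ⟨fun c => -(∑ k ∈ Finset.range n, ρ (h c k) (h c (k + 1))), ?_⟩
    intro a i a'
    rw [← hρ a i a']
    set b := Function.update a i a' with hb
    set f : ℕ → ∀ i, A i := fun j => if j ≤ n then h a j else h b (2 * n + 1 - j) with hf
    have hfa : ∀ k, k ≤ n → f k = h a k := fun k hk => if_pos hk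
    have hfb : ∀ k, n < k → f k = h b (2 * n + 1 - k) := fun k hk => if_neg (by omega)
    have hcyc := H (2 * n + 1) (fun j => f j.val) ?_ ?_
    · -- extract the potential equality from the cycle sum
      have hsum : (∑ k ∈ Finset.range (2 * n + 1), ρ (f k) (f (k + 1))) = 0 := by
        rw [← Fin.sum_univ_eq_sum_range (fun k => ρ (f k) (f (k + 1))) (2 * n + 1)]
        rw [← hcyc]
        apply Finset.sum_congr rfl
        intro j _
        simp [Fin.coe_castSucc, Fin.val_succ]
      have hsplit : (2 * n + 1) = (n + 1) + n := by omega
      rw [hsplit, Finset.sum_range_add, Finset.sum_range_succ] at hsum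
      have e1 : ∀ k ∈ Finset.range n, ρ (f k) (f (k + 1)) = ρ (h a k) (h a (k + 1)) := by
        intro k hk
        rw [Finset.mem_range] at hk
        rw [hfa k (by omega), hfa (k + 1) (by omega)]
      have e2 : ρ (f n) (f (n + 1)) = ρ a b := by
        rw [hfa n le_rfl, hfull]
        rcases Nat.eq_zero_or_pos n with h0n | hpos
        · exfalso
          have : Fintype.card ι ≠ 0 := Fintype.card_ne_zero
          omega
        · rw [hfb (n + 1) (by omega)]
          have : 2 * n + 1 - (n + 1) = n := by omega
          rw [this, hfull]
      have e3 : ∀ k ∈ Finset.range n, ρ (f (n + 1 + k)) (f (n + 1 + k + 1))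
          = -(ρ (h b (n - 1 - k)) (h b (n - 1 - k + 1))) := by
        intro k hk
        rw [Finset.mem_range] at hk
        rw [hfb (n + 1 + k) (by omega), hfb (n + 1 + k + 1) (by omega)]
        have hk1 : 2 * n + 1 - (n + 1 + k) = (n - 1 - k) + 1 := by omega
        have hk2 : 2 * n + 1 - (n + 1 + k + 1) = n - 1 - k := by omega
        rw [hk1, hk2]
        have hlt : n - 1 - k < n := by omega
        rw [hstep b (n - 1 - k) hlt, hanti]
      rw [Finset.sum_congr rfl e1, e2, Finset.sum_congr rfl e3,
        Finset.sum_neg_distrib] at hsum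
      rw [Finset.sum_range_reflect (fun k => ρ (h b k) (h b (k + 1))) n] at hsum
      show (-∑ k ∈ Finset.range n, ρ (h a k) (h a (k + 1)))
          - (-∑ k ∈ Finset.range n, ρ (h b k) (h b (k + 1))) = ρ a b
      linarith [hsum]
    · -- edges
      intro j
      have hjlt : j.val < 2 * n + 1 := j.isLt
      simp only [Fin.val_succ, Fin.coe_castSucc]
      rcases lt_trichotomy j.val n with hlt | heq | hgt
      · refine ⟨e.symm ⟨j.val, hlt⟩, a (e.symm ⟨j.val, hlt⟩), ?_⟩
        rw [hfa j.val (by omega), hfa (j.val + 1) (by omega), hstep a j.val hlt]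
      · refine ⟨i, a', ?_⟩
        rw [heq, hfa n le_rfl, hfull, hfb (n + 1) (by omega)]
        have : 2 * n + 1 - (n + 1) = n := by omega
        rw [this, hfull]
      · have hk : 2 * n - j.val < n := by omega
        refine ⟨e.symm ⟨2 * n - j.val, hk⟩, h b (2 * n - j.val) (e.symm ⟨2 * n - j.val, hk⟩), ?_⟩
        rw [hfb j.val hgt, hfb (j.val + 1) (by omega)]
        have h1 : 2 * n + 1 - j.val = (2 * n - j.val) + 1 := by omega
        have h2 : 2 * n + 1 - (j.val + 1) = 2 * n - j.val := by omega
        rw [h1, h2, hstep b (2 * n - j.val) hk, Function.update_idem,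
          Function.update_eq_self]
    · -- closing the cycle
      show f ((Fin.last (2 * n + 1)).val) = f ((0 : Fin (2 * n + 1 + 1)).val)
      simp only [Fin.val_last, Fin.val_zero]
      rw [hfb (2 * n + 1) (by omega), hfa 0 (by omega)]
      simp only [Nat.sub_self]
      rw [h0, h0]
end
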